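/- arXiv:1702.00217 — 8 statements merged into one kernel-verified Lean document; each statement's English description precedes it below -/
import Mathlib

section
/- Let M be a unitary magma. The partial composition on M-decorated cliques satisfies the parallel operad axiom: (x ∘_i y) ∘_{j+m-1} z = (x ∘_j z) ∘_i y for all i < j, where m is the arity of y. -/
/-!
Both sides insert `q` on the vertices `i, …, i + m` and `r` on the vertices
`j + m - 1, …, j + m - 1 + k` of the result; since `i < j` these blocks share at most an
endpoint. An arc ending at or before `j + m - 1` does not see `r`, and there `p ∘_j r` is only
read where it agrees with `p`. An arc starting at or after `i + m` does not see `q`, and there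
`p ∘_i q` is a shifted copy of `p`. The remaining arcs span both blocks: they are arcs of `p`,
or cross a block and carry the unit.
-/

/-- The partial composition `p ∘_i q` of the clique operad `C M` over a unitary
magma `M`.  An `M`-decorated clique of arity `n` is encoded as a function
`p : ℕ → ℕ → M` whose relevant values are on the arcs `(x, y)` with
`1 ≤ x < y ≤ n + 1`; the base of `p` is the arc `(1, n + 1)` and its `i`-th edge
is the arc `(i, i + 1)`.  Here `m` is the arity of `q`. -/
def cliqComp {M : Type*} [Mul M] [One M] (i m : ℕ) (p q : ℕ → ℕ → M) :
    ℕ → ℕ → M := fun x y =>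
  if y ≤ i then p x y
  else if x ≤ i ∧ i < i + m ∧ i + m ≤ y ∧ ¬(x = i ∧ y = i + m) then p x (y - m + 1)
  else if i + m ≤ x then p (x - m + 1) (y - m + 1)
  else if i ≤ x ∧ x < y ∧ y ≤ i + m ∧ ¬(x = i ∧ y = i + m) then q (x - i + 1) (y - i + 1)
  else if x = i ∧ y = i + m then p i (i + 1) * q 1 (m + 1)
  else 1

section

variable {M : Type*} [Mul M] [One M] {i m : ℕ} {p q : ℕ → ℕ → M} {x y : ℕ}

theorem cliqComp_of_le (hy : y ≤ i) : cliqComp i m p q x y = p x y := if_pos hy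

theorem cliqComp_of_le_of_ge (hm : 0 < m) (hx : x ≤ i) (hy : i + m ≤ y)
    (hb : ¬(x = i ∧ y = i + m)) : cliqComp i m p q x y = p x (y - m + 1) := by
  rw [cliqComp, if_neg (by omega), if_pos ⟨hx, by omega, hy, hb⟩]

theorem cliqComp_of_ge (hx : i + m ≤ x) (hxy : x < y) :
    cliqComp i m p q x y = p (x - m + 1) (y - m + 1) := by
  rw [cliqComp, if_neg (by omega), if_neg (by omega), if_pos hx]

theorem cliqComp_add_sub_one {a b : ℕ} (hm : 0 < m) (hia : i < a) (hab : a < b) :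
    cliqComp i m p q (a + (m - 1)) (b + (m - 1)) = p a b := by
  rw [cliqComp_of_ge (by omega) (by omega)]
  congr 1 <;> omega

theorem cliqComp_eq_one_of_crosses
    (h : x < i ∧ i < y ∧ y < i + m ∨ i < x ∧ x < i + m ∧ i + m < y) :
    cliqComp i m p q x y = 1 := by
  simp only [cliqComp]
  repeat rw [if_neg (by omega)]

theorem cliqComp_congr_of_le {p' : ℕ → ℕ → M} {c : ℕ}
    (hp : ∀ a b, b ≤ c → p a b = p' a b) (hic : i < c) (hy : y ≤ c + m - 1) :
    cliqComp i m p q x y = cliqComp i m p' q x y := by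
  simp only [cliqComp]
  split_ifs <;> first | rfl | rw [hp _ _ (by omega)]

theorem cliqComp_add_shift {p' : ℕ → ℕ → M} {s d : ℕ}
    (hp : ∀ a b, d ≤ a → a < b → p' (a + s) (b + s) = p a b)
    (hdi : d ≤ i + 1) (hdx : d + s ≤ x) (hxy : x < y) :
    cliqComp (i + s) m p' q x y = cliqComp i m p q (x - s) (y - s) := by
  obtain ⟨x, rfl⟩ : ∃ x', x = x' + s := ⟨x - s, by omega⟩
  obtain ⟨y, rfl⟩ : ∃ y', y = y' + s := ⟨y - s, by omega⟩
  simp only [cliqComp, Nat.add_sub_cancel, Nat.add_sub_add_right]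
  -- The branch conditions of the two sides now coincide, so mismatched branches are contradictory.
  split_ifs <;> first
    | omega
    | rfl
    | (rw [← hp] <;> first | omega | (congr 1 <;> omega) | (congr 2; omega))

end

theorem cliqComp_parallel_axiom_general (M : Type) [MulOneClass M]
    (m k i j : ℕ) (hm : 1 ≤ m) (hk : 1 ≤ k)
    (hij : i < j)
    (p q r : ℕ → ℕ → M) (x y : ℕ)
    (hxy : x < y) :
    cliqComp (j + m - 1) k (cliqComp i m p q) r x y =
      cliqComp i m (cliqComp j k p r) q x y := by
  rcases (by omega : y ≤ j + m - 1 ∨ i + m ≤ x ∨ x < i + m ∧ j + m - 1 < y)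
    with hy | hx | ⟨hx, hy⟩
  · rw [cliqComp_of_le hy]
    exact cliqComp_congr_of_le (fun a b hb => (cliqComp_of_le hb).symm) hij hy
  · rw [show j + m - 1 = j + (m - 1) by omega,
      cliqComp_add_shift (d := i + 1) (fun a b ha hab => cliqComp_add_sub_one hm ha hab)
        (by omega) (by omega) hxy,
      cliqComp_of_ge hx hxy]
    congr 1 <;> omega
  · rcases (by omega :
        x ≤ i ∧ j + m - 1 + k ≤ y ∨ i < x ∧ j + m - 1 + k ≤ y ∨ y < j + m - 1 + k)
      with ⟨hx', hy'⟩ | ⟨hx', hy'⟩ | hy'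
    · rw [cliqComp_of_le_of_ge hk (by omega) hy' (by omega),
        cliqComp_of_le_of_ge hm hx' (by omega) (by omega),
        cliqComp_of_le_of_ge hm hx' (by omega) (by omega),
        cliqComp_of_le_of_ge hk (by omega) (by omega) (by omega)]
      congr 1; omega
    · rw [cliqComp_of_le_of_ge hk (by omega) hy' (by omega),
        cliqComp_eq_one_of_crosses (by omega), cliqComp_eq_one_of_crosses (by omega)]
    · rw [cliqComp_eq_one_of_crosses (by omega)]
      rcases Nat.lt_or_ge i x with hx' | hx'
      · rw [cliqComp_eq_one_of_crosses (by omega)]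
      · rw [cliqComp_of_le_of_ge hm hx' (by omega) (by omega),
          cliqComp_eq_one_of_crosses (by omega)]

/-- Parallel operad axiom for the clique operad `C M`:
`(p ∘_i q) ∘_{j+m-1} r = (p ∘_j r) ∘_i q` where `p, q, r` have respective
arities `n, m, k` and `1 ≤ i < j ≤ n`; the equality holds on all the arcs
`(x, y)` with `1 ≤ x < y ≤ n + m + k - 1` of the resulting clique of arity
`n + m + k - 2`. -/
theorem cliqComp_parallel_axiom (M : Type) [MulOneClass M]
    (n m k i j : ℕ) (hn : 1 ≤ n) (hm : 1 ≤ m) (hk : 1 ≤ k)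
    (hi : 1 ≤ i) (hij : i < j) (hj : j ≤ n)
    (p q r : ℕ → ℕ → M) (x y : ℕ)
    (hx : 1 ≤ x) (hxy : x < y) (hy : y ≤ n + m + k - 1) :
    cliqComp (j + m - 1) k (cliqComp i m p q) r x y =
      cliqComp i m (cliqComp j k p r) q x y :=
  cliqComp_parallel_axiom_general M m k i j hm hk hij p q r x y hxy
end

section
/- Let M be a unitary magma, p an M-clique of arity n ≥ 2, and (x,y) a diagonal of p. Then the crossing number of (x,y) is 0 (no solid diagonal (x',y') satisfies x < x' < y < y' or x' < x < y' < y) if and only if p factors as p = q ∘_x r where q is an M-clique of arity n + x - y + 1 and r is an M-clique of arity y - x. -/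
def Crosses (a b c d : ℕ) : Prop :=
  a < c ∧ c < b ∧ b < d ∨ c < a ∧ a < d ∧ d < b

-- The edge `(x, x + 1)` carries the unit, so that `∘_x` gives `(x, y)` the label of `p`.
def cliqOuter {M : Type*} [One M] (x y : ℕ) (p : ℕ → ℕ → M) : ℕ → ℕ → M :=
  fun a b =>
    if a = x ∧ b = x + 1 then 1
    else if b ≤ x then p a b
    else if a ≤ x then p a (b + (y - x) - 1)
    else p (a + (y - x) - 1) (b + (y - x) - 1)

def cliqInner {M : Type*} (x : ℕ) (p : ℕ → ℕ → M) : ℕ → ℕ → M := fun a b =>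
  p (a + x - 1) (b + x - 1)

@[simp]
theorem cliqOuter_self_succ {M : Type*} [One M] {x y : ℕ} (p : ℕ → ℕ → M) :
    cliqOuter x y p x (x + 1) = 1 := by
  simp [cliqOuter]

theorem cliqComp_eq_one_of_crosses_s5 {M : Type*} [Mul M] [One M] {x y a b : ℕ}
    (p q : ℕ → ℕ → M) (hc : Crosses x y a b) :
    cliqComp x (y - x) p q a b = 1 := by
  unfold Crosses at hc
  simp only [cliqComp]
  split_ifs <;> first | rfl | omega

theorem cliqComp_cliqOuter_cliqInner {M : Type*} [MulOneClass M] {x y a b : ℕ}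
    (p : ℕ → ℕ → M) (hxy : x < y) (hab : a < b) (hc : ¬Crosses x y a b) :
    cliqComp x (y - x) (cliqOuter x y p) (cliqInner x p) a b = p a b := by
  have congr_p : ∀ {a' b'}, a' = a → b' = b → p a' b' = p a b := by
    rintro _ _ rfl rfl; rfl
  unfold Crosses at hc
  simp only [cliqComp]
  split_ifs
  all_goals first
    | omega
    | (rw [cliqOuter_self_succ, one_mul]; exact congr_p (by omega) (by omega))
    | (simp only [cliqInner]; exact congr_p (by omega) (by omega))
    | (simp only [cliqOuter]
       split_ifs <;> first | omega | exact congr_p (by omega) (by omega))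

theorem crossing_zero_iff_decomposable_general (M : Type) [MulOneClass M]
    (n : ℕ) (p : ℕ → ℕ → M) (x y : ℕ)
    (hx : 1 ≤ x) (hxy : x < y) (hy : y ≤ n + 1) :
    ((∀ x' y' : ℕ, 1 ≤ x' → x' < y' → y' ≤ n + 1 →
        y' ≠ x' + 1 → ¬(x' = 1 ∧ y' = n + 1) → p x' y' ≠ 1 →
        ¬(x < x' ∧ x' < y ∧ y < y') ∧ ¬(x' < x ∧ x < y' ∧ y' < y)) ↔
      ∃ q r : ℕ → ℕ → M, ∀ a b : ℕ, 1 ≤ a → a < b → b ≤ n + 1 →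
        p a b = cliqComp x (y - x) q r a b) := by
  constructor
  · intro hcross
    refine ⟨cliqOuter x y p, cliqInner x p, fun a b ha hab hb => ?_⟩
    by_cases hc : Crosses x y a b
    · rw [cliqComp_eq_one_of_crosses_s5 _ _ hc]
      by_contra hsolid
      have hdiag : b ≠ a + 1 ∧ ¬(a = 1 ∧ b = n + 1) := by unfold Crosses at hc; omega
      exact not_or.2 (hcross a b ha hab hb hdiag.1 hdiag.2 hsolid) hc
    · exact (cliqComp_cliqOuter_cliqInner p hxy hab hc).symm
  · rintro ⟨q, r, hqr⟩ a b ha hab hb - - hsolid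
    exact not_or.1 fun hc =>
      hsolid ((hqr a b ha hab hb).trans (cliqComp_eq_one_of_crosses_s5 q r hc))

/-- Let `p` be an `M`-clique of arity `n ≥ 2` and `(x, y)` a diagonal of `p`.
The crossing number of `(x, y)` is `0` (no solid diagonal of `p` crosses it) if
and only if `p = q ∘_x r` for an `M`-clique `q` of arity `n + x - y + 1` and an
`M`-clique `r` of arity `y - x`.  Here solid means labeled by an element
different from the unit, and equality of cliques is equality on all the arcs
`(a, b)` with `1 ≤ a < b ≤ n + 1`. -/
theorem crossing_zero_iff_decomposable (M : Type) [MulOneClass M]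
    (n : ℕ) (hn : 2 ≤ n) (p : ℕ → ℕ → M) (x y : ℕ)
    (hx : 1 ≤ x) (hxy : x < y) (hy : y ≤ n + 1)
    (hne : y ≠ x + 1) (hnb : ¬(x = 1 ∧ y = n + 1)) :
    ((∀ x' y' : ℕ, 1 ≤ x' → x' < y' → y' ≤ n + 1 →
        y' ≠ x' + 1 → ¬(x' = 1 ∧ y' = n + 1) → p x' y' ≠ 1 →
        ¬(x < x' ∧ x' < y ∧ y < y') ∧ ¬(x' < x ∧ x < y' ∧ y' < y)) ↔
      ∃ q r : ℕ → ℕ → M, ∀ a b : ℕ, 1 ≤ a → a < b → b ≤ n + 1 →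
        p a b = cliqComp x (y - x) q r a b) :=
  crossing_zero_iff_decomposable_general M n p x y hx hxy hy
end

section
/- Let M be a unitary magma. The fundamental (set-theoretic) basis of the clique operad CM is basic — i.e., for every clique q and index i, the map p ↦ p ∘_i q is injective — if and only if M is right cancellable. -/
/-!
Every arc of `p` other than its `i`-th edge reappears, after reindexing its endpoints, with the
same label in `p ∘_i q`, while the `i`-th edge of `p` becomes the base of the inserted clique `q`,
labelled `p i (i + 1) * q 1 (m + 1)`. Hence `p` can be recovered from `p ∘_i q` as soon as right
multiplications are injective; conversely, for `n = m = 1` the composite `p ∘_1 q` consists of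
that single product arc.
-/

namespace CliqComp

variable {M : Type*} [Mul M] [One M]

/-- The vertex of `p ∘_i q` that the vertex `a` of `p` becomes when `q` has arity `m`. -/
def shift (i m a : ℕ) : ℕ := if a ≤ i then a else a + m - 1

theorem one_le_shift {i m a : ℕ} (hm : 1 ≤ m) (ha : 1 ≤ a) : 1 ≤ shift i m a := by
  unfold shift; split_ifs <;> omega

theorem shift_strictMono {i m : ℕ} (hm : 1 ≤ m) : StrictMono (shift i m) := by
  intro a b hab; unfold shift; split_ifs <;> omega

theorem shift_le_add {i m a n : ℕ} (hm : 1 ≤ m) (ha : a ≤ n + 1) : shift i m a ≤ n + m := by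
  unfold shift; split_ifs <;> omega

theorem cliqComp_shift {i m a b : ℕ} (p q : ℕ → ℕ → M) (hm : 1 ≤ m) (hab : a < b)
    (hne : ¬(a = i ∧ b = i + 1)) : cliqComp i m p q (shift i m a) (shift i m b) = p a b := by
  unfold cliqComp shift
  split_ifs <;> first | omega | congr 1 <;> omega

theorem cliqComp_base (i : ℕ) {m : ℕ} (p q : ℕ → ℕ → M) (hm : 1 ≤ m) :
    cliqComp i m p q i (i + m) = p i (i + 1) * q 1 (m + 1) := by
  unfold cliqComp
  split_ifs <;> first | omega | rfl

theorem eq_on_arcs_of_cliqComp_eq (hcancel : ∀ x y z : M, y * x = z * x → y = z)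
    {n m i : ℕ} (hm : 1 ≤ m) {p p' q : ℕ → ℕ → M}
    (h : ∀ a b : ℕ, 1 ≤ a → a < b → b ≤ n + m →
      cliqComp i m p q a b = cliqComp i m p' q a b)
    (a b : ℕ) (ha : 1 ≤ a) (hab : a < b) (hb : b ≤ n + 1) : p a b = p' a b := by
  by_cases hedge : a = i ∧ b = i + 1
  · obtain ⟨rfl, rfl⟩ := hedge
    have hbase := h a (a + m) ha (by omega) (by omega)
    rw [cliqComp_base a p q hm, cliqComp_base a p' q hm] at hbase
    exact hcancel _ _ _ hbase
  · have harc := h (shift i m a) (shift i m b) (one_le_shift hm ha)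
      (shift_strictMono hm hab) (shift_le_add hm hb)
    rwa [cliqComp_shift p q hm hab hedge, cliqComp_shift p' q hm hab hedge] at harc

end CliqComp

open CliqComp in
/-- The fundamental set-theoretic basis of the clique operad `C M` is basic —
i.e., for every clique `q` of arity `m` and index `i ∈ [n]`, the map
`p ↦ p ∘_i q` on cliques of arity `n` is injective (cliques being identified
when they agree on all the arcs of their domain) — if and only if the unitary
magma `M` is right cancellable. -/
theorem basic_iff_right_cancellable (M : Type) [MulOneClass M] :
    (∀ n m i : ℕ, 1 ≤ n → 1 ≤ m → 1 ≤ i → i ≤ n →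
      ∀ p p' q : ℕ → ℕ → M,
        (∀ a b : ℕ, 1 ≤ a → a < b → b ≤ n + m →
          cliqComp i m p q a b = cliqComp i m p' q a b) →
        (∀ a b : ℕ, 1 ≤ a → a < b → b ≤ n + 1 → p a b = p' a b)) ↔
    (∀ x y z : M, y * x = z * x → y = z) := by
  refine ⟨fun hbasic x y z hxyz => ?_,
    fun hcancel _ _ _ _ hm _ _ _ _ _ h => eq_on_arcs_of_cliqComp_eq hcancel hm h⟩
  refine hbasic 1 1 1 le_rfl le_rfl le_rfl le_rfl (fun _ _ => y) (fun _ _ => z) (fun _ _ => x)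
    (fun a b ha hab hb => ?_) 1 2 le_rfl one_lt_two le_rfl
  obtain ⟨rfl, rfl⟩ : a = 1 ∧ b = 2 := by omega
  have hbase (r : M) : cliqComp 1 1 (fun _ _ => r) (fun _ _ => x) 1 2 = r * x :=
    cliqComp_base 1 _ _ le_rfl
  rw [hbase, hbase, hxyz]
end

section
/- Let M be a Z-graded unitary magma with rank function θ : M → Z (a unitary magma morphism). The map F_θ sending an M-clique p of arity n to the rational function ∏_{(x,y) arc of p} (u_x + ... + u_{y-1})^{θ(p(x,y))} is an operad morphism from CM to Loday's operad RatFct of rational functions. -/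
noncomputable section

/-- The field of rational functions in the commuting variables `u_1, u_2, …`
(realized as the fraction field of the polynomial ring `ℚ[u_0, u_1, …]`),
underlying Loday's operad `RatFct`. -/
abbrev Fld : Type := FractionRing (MvPolynomial ℕ ℚ)

/-- The rational function `u_x + u_{x+1} + ⋯ + u_{y-1}`. -/
def uSum (x y : ℕ) : Fld :=
  algebraMap (MvPolynomial ℕ ℚ) Fld (∑ t ∈ Finset.Ico x y, MvPolynomial.X t)

/-- The rational function `F_θ(p) = ∏_{(x,y) arc of p} (u_x + ⋯ + u_{y-1})^{θ(p(x,y))}`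
associated with a clique `p` of arity `n` labeled by `M` and a rank function `θ : M → ℤ`. -/
def cliqueFct {M : Type*} (θ : M → ℤ) (n : ℕ) (p : ℕ → ℕ → M) : Fld :=
  ∏ x ∈ Finset.Icc 1 n, ∏ y ∈ Finset.Icc (x + 1) (n + 1), uSum x y ^ θ (p x y)

open Classical in
/-- The substitution homomorphism on rational functions induced by an assignment
`f` of the variables (well-defined whenever the induced map on polynomials is
injective, which is the case for the substitutions appearing in the partial
compositions of `RatFct`). -/
def substF (f : ℕ → MvPolynomial ℕ ℚ) : Fld →+* Fld :=
  if h : Function.Injective ((algebraMap (MvPolynomial ℕ ℚ) Fld).comp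
      (MvPolynomial.aeval f : MvPolynomial ℕ ℚ →ₐ[ℚ] MvPolynomial ℕ ℚ).toRingHom) then
    IsFractionRing.lift h
  else RingHom.id Fld

/-- The substitution `u_i ↦ u_i + ⋯ + u_{i+m-1}`, `u_j ↦ u_j` for `j < i`, and
`u_j ↦ u_{j+m-1}` for `j > i`, applied to the first factor in the partial
composition `f ∘_i g` of Loday's operad `RatFct`. -/
def lodaySubst (i m : ℕ) : ℕ → MvPolynomial ℕ ℚ := fun j =>
  if j < i then MvPolynomial.X j
  else if j = i then ∑ t ∈ Finset.Ico i (i + m), MvPolynomial.X t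
  else MvPolynomial.X (j + m - 1)

/-- The substitution `u_j ↦ u_{i+j-1}` applied to the second factor in the
partial composition `f ∘_i g` of Loday's operad `RatFct`. -/
def shiftSubst (i : ℕ) : ℕ → MvPolynomial ℕ ℚ := fun j => MvPolynomial.X (i + j - 1)


/-!
Each factor `u_x + ⋯ + u_{y-1}` of `F_θ(p)` is sent by the substitution of `RatFct` to another
such block sum `u_{v x} + ⋯ + u_{v y - 1}`, where `v` is the strictly monotone map by which the
vertices of `p` (resp. `q`) are relabelled inside the composite clique `p ∘_i q`. Hence both
substituted factors are again products over arcs of `p ∘_i q`, one carrying the labels coming from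
`p` and the other those coming from `q`. Since `θ` turns the only label built from both, on the
base arc `(i, i + m)`, into a sum, the product of the two is `F_θ(p ∘_i q)`.
-/

open MvPolynomial Finset

local notation "R" => MvPolynomial ℕ ℚ

section Substitution

lemma substF_algebraMap {f : ℕ → R} (hf : Function.Injective (aeval f : R →ₐ[ℚ] R)) (x : R) :
    substF f (algebraMap R Fld x) = algebraMap R Fld (aeval f x) := by
  have hf' : Function.Injective ((algebraMap R Fld).comp (aeval f : R →ₐ[ℚ] R).toRingHom) :=
    (IsFractionRing.injective R Fld).comp hf
  rw [substF, dif_pos hf']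
  exact IsFractionRing.lift_algebraMap hf' x

def blockSubst (v : ℕ → ℕ) : ℕ → R := fun j => ∑ t ∈ Ico (v j) (v (j + 1)), X t

variable {v : ℕ → ℕ}

/-- A left inverse sends `u_{v j}` back to `u_j` and kills the other variables. -/
lemma aeval_blockSubst_injective (hv : StrictMono v) :
    Function.Injective (aeval (blockSubst v) : R →ₐ[ℚ] R) := by
  classical
  let g : ℕ → R := fun t => if t ∈ Set.range v then X (Function.invFun v t) else 0
  have hg : ∀ j, aeval g (blockSubst v j) = X j := by
    intro j
    have hj : v j ∈ Ico (v j) (v (j + 1)) := by simp [hv (Nat.lt_succ_self j)]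
    simp only [blockSubst, map_sum, aeval_X]
    rw [sum_eq_single_of_mem (v j) hj]
    · simp [g, Function.leftInverse_invFun hv.injective j]
    · rintro t ht htj
      simp only [mem_Ico] at ht
      have hnot : t ∉ Set.range v := by
        rintro ⟨k, rfl⟩
        have h1 := hv.lt_iff_lt.mp (lt_of_le_of_ne ht.1 (Ne.symm htj))
        have h2 := hv.lt_iff_lt.mp ht.2
        omega
      exact if_neg hnot
  have hleft : (aeval g).comp (aeval (blockSubst v)) = AlgHom.id ℚ R :=
    algHom_ext fun j => by rw [AlgHom.comp_apply, aeval_X, hg, AlgHom.id_apply]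
  exact Function.LeftInverse.injective fun x => by simpa using DFunLike.congr_fun hleft x

lemma aeval_blockSubst_sum_Ico (hv : Monotone v) {x y : ℕ} (hxy : x ≤ y) :
    aeval (blockSubst v) (∑ t ∈ Ico x y, X t : R) = ∑ t ∈ Ico (v x) (v y), X t := by
  induction y, hxy using Nat.le_induction with
  | base => simp
  | succ y hxy ih =>
    rw [sum_Ico_succ_top hxy, map_add, ih, aeval_X, blockSubst,
      sum_Ico_consecutive _ (hv hxy) (hv (Nat.le_succ y))]

lemma substF_blockSubst_uSum (hv : StrictMono v) {x y : ℕ} (hxy : x ≤ y) :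
    substF (blockSubst v) (uSum x y) = uSum (v x) (v y) := by
  rw [uSum, substF_algebraMap (aeval_blockSubst_injective hv),
    aeval_blockSubst_sum_Ico hv.monotone hxy, uSum]

end Substitution

/-- The vertex relabelling of the first argument of `p ∘_i q`: the `m - 1` inner vertices of `q`
are inserted after vertex `i`. -/
def shiftAfter (i m : ℕ) (j : ℕ) : ℕ := if j ≤ i then j else j + m - 1

lemma shiftAfter_strictMono {i m : ℕ} (hm : 1 ≤ m) : StrictMono (shiftAfter i m) :=
  strictMono_nat_of_lt_succ fun j => by unfold shiftAfter; split_ifs <;> omega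

lemma lodaySubst_eq_blockSubst {i m : ℕ} (hm : 1 ≤ m) :
    lodaySubst i m = blockSubst (shiftAfter i m) := by
  funext j
  rcases lt_trichotomy j i with hj | rfl | hj
  · simp [lodaySubst, blockSubst, shiftAfter, hj, hj.le, Nat.succ_le_of_lt hj]
  · simp [lodaySubst, blockSubst, shiftAfter, show ¬ j + 1 ≤ j by omega,
      show j + 1 + m - 1 = j + m by omega]
  · rw [lodaySubst, blockSubst, shiftAfter, shiftAfter, if_neg (by omega), if_neg (by omega),
      if_neg hj.not_ge, if_neg (by omega), show j + 1 + m - 1 = j + m - 1 + 1 by omega,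
      Nat.Ico_succ_singleton, sum_singleton]

lemma shiftSubst_eq_blockSubst {i : ℕ} (hi : 1 ≤ i) :
    shiftSubst i = blockSubst (· + (i - 1)) := by
  funext j
  rw [shiftSubst, blockSubst, show j + 1 + (i - 1) = j + (i - 1) + 1 by omega,
    Nat.Ico_succ_singleton, sum_singleton, show i + j - 1 = j + (i - 1) by omega]

section Arcs

def arcs (n : ℕ) : Finset (ℕ × ℕ) :=
  (Icc 1 (n + 1) ×ˢ Icc 1 (n + 1)).filter fun a => a.1 < a.2

lemma mem_arcs {n : ℕ} {a : ℕ × ℕ} : a ∈ arcs n ↔ 1 ≤ a.1 ∧ a.1 < a.2 ∧ a.2 ≤ n + 1 := by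
  simp only [arcs, mem_filter, mem_product, mem_Icc]
  omega

variable {M : Type*} (θ : M → ℤ)

lemma cliqueFct_eq_prod_arcs (n : ℕ) (p : ℕ → ℕ → M) :
    cliqueFct θ n p = ∏ a ∈ arcs n, uSum a.1 a.2 ^ θ (p a.1 a.2) := by
  rw [cliqueFct, prod_finset_product (arcs n) (Icc 1 n) (fun x => Icc (x + 1) (n + 1))
    fun a => by simp only [mem_arcs, mem_Icc]; omega]

lemma uSum_ne_zero {x y : ℕ} (hxy : x < y) : uSum x y ≠ 0 := by
  intro h
  have hsum : (∑ t ∈ Ico x y, X t : R) = 0 :=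
    IsFractionRing.injective R Fld (by rw [map_zero]; exact h)
  have hcard := congrArg (eval fun _ => (1 : ℚ)) hsum
  simp only [map_sum, eval_X, sum_const, Nat.card_Ico, nsmul_eq_mul, mul_one, map_zero,
    Nat.cast_eq_zero] at hcard
  omega

lemma cliqueFct_mul {N : ℕ} {r r₁ r₂ : ℕ → ℕ → M}
    (h : ∀ x y, θ (r x y) = θ (r₁ x y) + θ (r₂ x y)) :
    cliqueFct θ N r = cliqueFct θ N r₁ * cliqueFct θ N r₂ := by
  simp only [cliqueFct_eq_prod_arcs, ← prod_mul_distrib]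
  refine prod_congr rfl fun a ha => ?_
  rw [h, zpow_add₀ (uSum_ne_zero (mem_arcs.mp ha).2.1)]

lemma substF_blockSubst_cliqueFct [One M] (hθ1 : θ 1 = 0) {v : ℕ → ℕ} (hv : StrictMono v)
    {n N : ℕ} {p r : ℕ → ℕ → M} (hmaps : ∀ a ∈ arcs n, (v a.1, v a.2) ∈ arcs N)
    (hlabel : ∀ a ∈ arcs n, r (v a.1) (v a.2) = p a.1 a.2)
    (hunit : ∀ b ∈ arcs N, r b.1 b.2 ≠ 1 → ∃ a ∈ arcs n, (v a.1, v a.2) = b) :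
    substF (blockSubst v) (cliqueFct θ n p) = cliqueFct θ N r := by
  simp only [cliqueFct_eq_prod_arcs, map_prod, map_zpow₀]
  refine prod_of_injOn (fun a => (v a.1, v a.2)) ?_ hmaps ?_ fun a ha => ?_
  · intro a _ b _ hab
    simp only [Prod.mk.injEq] at hab
    exact Prod.ext (hv.injective hab.1) (hv.injective hab.2)
  · intro b hb hnot
    by_contra hne
    obtain ⟨a, ha, rfl⟩ := hunit b hb fun h1 => hne (by rw [h1, hθ1, zpow_zero])
    exact hnot ⟨a, ha, rfl⟩
  · rw [substF_blockSubst_uSum hv (mem_arcs.mp ha).2.1.le, hlabel a ha]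

end Arcs

section CliqComp

variable {M : Type*} [MulOneClass M] {i m : ℕ}

lemma cliqComp_one_right_shiftAfter (hm : 1 ≤ m) (p : ℕ → ℕ → M) {x y : ℕ} (hxy : x < y) :
    cliqComp i m p 1 (shiftAfter i m x) (shiftAfter i m y) = p x y := by
  unfold cliqComp shiftAfter
  split_ifs <;> (try simp only [Pi.one_apply, mul_one]) <;> first | omega | (congr 1 <;> omega)

lemma exists_shiftAfter_of_cliqComp_one_right_ne_one {n : ℕ} (hi : i ≤ n)
    (p : ℕ → ℕ → M) {b : ℕ × ℕ} (hb : b ∈ arcs (n + m - 1)) (hne : cliqComp i m p 1 b.1 b.2 ≠ 1) :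
    ∃ a ∈ arcs n, (shiftAfter i m a.1, shiftAfter i m a.2) = b := by
  obtain ⟨X, Y⟩ := b
  rw [mem_arcs] at hb
  unfold cliqComp at hne
  refine ⟨(if X ≤ i then X else X - m + 1, if Y ≤ i then Y else Y - m + 1), ?_, ?_⟩ <;>
    simp only [mem_arcs, shiftAfter, Prod.mk.injEq] <;>
    split_ifs at hne ⊢ <;> first | omega | exact absurd rfl hne

lemma cliqComp_one_left_add (q : ℕ → ℕ → M) (hi : 1 ≤ i) {x y : ℕ} (hx : 1 ≤ x) (hxy : x < y)
    (hy : y ≤ m + 1) : cliqComp i m 1 q (x + (i - 1)) (y + (i - 1)) = q x y := by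
  unfold cliqComp
  split_ifs <;> (try simp only [Pi.one_apply, one_mul]) <;> first | omega | (congr 1 <;> omega)

lemma exists_add_of_cliqComp_one_left_ne_one {n : ℕ} (q : ℕ → ℕ → M) {b : ℕ × ℕ}
    (hb : b ∈ arcs (n + m - 1)) (hne : cliqComp i m 1 q b.1 b.2 ≠ 1) :
    ∃ a ∈ arcs m, (a.1 + (i - 1), a.2 + (i - 1)) = b := by
  obtain ⟨X, Y⟩ := b
  rw [mem_arcs] at hb
  unfold cliqComp at hne
  refine ⟨(X - (i - 1), Y - (i - 1)), ?_, ?_⟩ <;>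
    simp only [mem_arcs, Prod.mk.injEq] <;>
    split_ifs at hne <;> first | omega | exact absurd rfl hne

lemma map_cliqComp_eq_add {θ : M → ℤ} (hθ1 : θ 1 = 0) (hθmul : ∀ a b : M, θ (a * b) = θ a + θ b)
    (p q : ℕ → ℕ → M) (x y : ℕ) :
    θ (cliqComp i m p q x y) = θ (cliqComp i m p 1 x y) + θ (cliqComp i m 1 q x y) := by
  unfold cliqComp
  split_ifs <;> simp [hθ1, hθmul]

variable {θ : M → ℤ}

lemma substF_lodaySubst_cliqueFct (hθ1 : θ 1 = 0) (hm : 1 ≤ m) {n : ℕ} (hi : i ≤ n)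
    (p : ℕ → ℕ → M) :
    substF (lodaySubst i m) (cliqueFct θ n p) = cliqueFct θ (n + m - 1) (cliqComp i m p 1) := by
  rw [lodaySubst_eq_blockSubst hm]
  refine substF_blockSubst_cliqueFct θ hθ1 (shiftAfter_strictMono hm) (fun a ha => ?_)
    (fun a ha => cliqComp_one_right_shiftAfter hm p (mem_arcs.mp ha).2.1)
    (fun b hb => exists_shiftAfter_of_cliqComp_one_right_ne_one hi p hb)
  rw [mem_arcs] at ha ⊢
  simp only [shiftAfter]
  split_ifs <;> omega

lemma substF_shiftSubst_cliqueFct (hθ1 : θ 1 = 0) (hi1 : 1 ≤ i) {n : ℕ} (hi2 : i ≤ n)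
    (q : ℕ → ℕ → M) :
    substF (shiftSubst i) (cliqueFct θ m q) = cliqueFct θ (n + m - 1) (cliqComp i m 1 q) := by
  rw [shiftSubst_eq_blockSubst hi1]
  refine substF_blockSubst_cliqueFct θ hθ1 (fun _ _ h => Nat.add_lt_add_right h _)
    (fun a ha => by rw [mem_arcs] at ha ⊢; omega)
    (fun a ha => cliqComp_one_left_add q hi1 (mem_arcs.mp ha).1 (mem_arcs.mp ha).2.1
      (mem_arcs.mp ha).2.2)
    (fun b hb => exists_add_of_cliqComp_one_left_ne_one q hb)

end CliqComp

theorem cliqueFct_operad_morphism_general (M : Type) [MulOneClass M] (θ : M → ℤ)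
    (hθ1 : θ 1 = 0) (hθmul : ∀ a b : M, θ (a * b) = θ a + θ b)
    (n m i : ℕ) (hm : 1 ≤ m) (hi1 : 1 ≤ i) (hi2 : i ≤ n)
    (p q : ℕ → ℕ → M) :
    cliqueFct θ 1 (fun _ _ => (1 : M)) = 1 ∧
    cliqueFct θ (n + m - 1) (cliqComp i m p q) =
      substF (lodaySubst i m) (cliqueFct θ n p) *
        substF (shiftSubst i) (cliqueFct θ m q) := by
  refine ⟨by simp [cliqueFct, hθ1], ?_⟩
  rw [cliqueFct_mul θ (map_cliqComp_eq_add hθ1 hθmul p q), substF_lodaySubst_cliqueFct hθ1 hm hi2,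
    substF_shiftSubst_cliqueFct hθ1 hi1 hi2]

/-- Let `M` be a `ℤ`-graded unitary magma with rank function `θ : M → ℤ` (a
unitary magma morphism to the additive integers).  Then `F_θ` is an operad
morphism from the clique operad `C M` to Loday's operad `RatFct`: it sends the
unit clique to `1` and satisfies
`F_θ(p ∘_i q) = F_θ(p)(u_1,…,u_{i-1}, u_i+⋯+u_{i+m-1}, u_{i+m},…) · F_θ(q)(u_i,…,u_{i+m-1})`. -/
theorem cliqueFct_operad_morphism (M : Type) [MulOneClass M] (θ : M → ℤ)
    (hθ1 : θ 1 = 0) (hθmul : ∀ a b : M, θ (a * b) = θ a + θ b)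
    (n m i : ℕ) (hn : 1 ≤ n) (hm : 1 ≤ m) (hi1 : 1 ≤ i) (hi2 : i ≤ n)
    (p q : ℕ → ℕ → M) :
    cliqueFct θ 1 (fun _ _ => (1 : M)) = 1 ∧
    cliqueFct θ (n + m - 1) (cliqComp i m p q) =
      substF (lodaySubst i m) (cliqueFct θ n p) *
        substF (shiftSubst i) (cliqueFct θ m q) :=
  cliqueFct_operad_morphism_general M θ hθ1 hθmul n m i hm hi1 hi2 p q

end
end

section
/- The set of inclusion-free M-cliques of arity n ≥ 2 is in bijection with the set of Dyck paths of size n+1 in which each letter 'a' occurring at an even position is colored by a non-unit element of M; moreover this bijection sends cliques with exactly k solid arcs to paths with exactly k letters 'a' at even positions. -/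
/-- The set of arcs `(x, y)`, `x < y`, of a complete graph on `n + 1` vertices. -/
def Arc (n : ℕ) : Type := {a : Fin (n + 1) × Fin (n + 1) // a.1 < a.2}

/-- An `M`-clique is inclusion-free if whenever a solid arc includes a solid arc
(arc `(x, y)` includes arc `(x', y')` when `x ≤ x' < y' ≤ y`), the two arcs are
equal.  An arc is solid if its label is different from the unit of `M`. -/
def InclusionFree {M : Type} [One M] {n : ℕ} (p : Arc n → M) : Prop :=
  ∀ a b : Arc n, p a ≠ 1 → p b ≠ 1 →
    a.val.1 ≤ b.val.1 → b.val.2 ≤ a.val.2 → a = b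

/-- A Dyck path of size `n + 1` (a word of length `2(n+1)` over `{a, b}`, with
`true` encoding the letter `a` and `false` the letter `b`, having as many `a`'s
as `b`'s and every prefix containing at least as many `a`'s as `b`'s) in which
every letter `a` occurring at an even position (positions being numbered from
`1`, so even positions are the indices `i` with `i % 2 = 1` in the `0`-indexed
encoding) is colored by a non-unit element of `M`. -/
structure ColoredDyck (M : Type) [One M] (n : ℕ) where
  w : Fin (2 * (n + 1)) → Bool
  balanced : (Finset.univ.filter (fun i => w i = true)).card = n + 1
  prefixCond : ∀ j : ℕ,
    (Finset.univ.filter (fun i : Fin (2 * (n + 1)) => (i : ℕ) < j ∧ w i = false)).card ≤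
      (Finset.univ.filter (fun i : Fin (2 * (n + 1)) => (i : ℕ) < j ∧ w i = true)).card
  color : ∀ i : Fin (2 * (n + 1)), w i = true → (i : ℕ) % 2 = 1 → {x : M // x ≠ 1}

/-! The solid arcs of an inclusion-free clique have pairwise distinct left ends and pairwise
distinct right ends, and are ordered the same way by both, so the clique is determined by the
set `L` of left ends, the set `R` of right ends (the `r`-th smallest element of `L` being joined
to the `r`-th smallest element of `R`) and the labels. The pairs `(L, R)` that occur are those with
`#L = #R` in which, for every `m`, at most as many elements of `R` lie in `[0, m]` as elements of
`L` in `[0, m)`. Writing for each vertex `x`, from left to right, the letter `b` if `x ∈ R` and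
`a` otherwise, followed by the letter `a` if `x ∈ L` and `b` otherwise, turns this condition into
the Dyck prefix condition. The letters `a` at even positions then correspond to the left ends,
that is, to the solid arcs, and carry their labels. -/

open Finset

namespace Finset

variable {k : ℕ} (s : Finset (Fin k))

def countBelow (m : ℕ) : ℕ := #{x ∈ s | x.val < m}

lemma countBelow_zero : countBelow s 0 = 0 := by simp [countBelow]

lemma countBelow_succ (x : Fin k) :
    countBelow s (x.val + 1) = countBelow s x + if x ∈ s then 1 else 0 := by
  have hsplit :
      {y ∈ s | y.val < x.val + 1} = {y ∈ s | y.val < x.val} ∪ {y ∈ s | y = x} := by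
    ext y
    simp only [mem_union, mem_filter, ← and_or_left, Nat.lt_succ_iff_lt_or_eq, Fin.val_inj]
  rw [countBelow, hsplit, card_union_of_disjoint, filter_eq' s x]
  · split_ifs <;> rfl
  · exact disjoint_filter.2 fun y _ hlt heq => by simp [heq] at hlt

lemma countBelow_of_le {m : ℕ} (hm : k ≤ m) : countBelow s m = #s := by
  rw [countBelow, filter_true_of_mem fun x _ => x.isLt.trans_le hm]

lemma countBelow_min (m : ℕ) : countBelow s (min m k) = countBelow s m := by
  rcases le_total m k with hm | hm
  · rw [min_eq_left hm]
  · rw [min_eq_right hm, countBelow_of_le s le_rfl, countBelow_of_le s hm]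

lemma countBelow_mono : Monotone (countBelow s) := fun _ _ hm =>
  card_le_card <| monotone_filter_right s fun _ _ hx => hx.trans_le hm

lemma countBelow_le_card (m : ℕ) : countBelow s m ≤ #s := card_filter_le _ _

lemma countBelow_lt_countBelow {x y : Fin k} (hx : x ∈ s) (hxy : x < y) :
    countBelow s x < countBelow s y :=
  calc countBelow s x < countBelow s (x + 1) := by simp [countBelow_succ, hx]
    _ ≤ countBelow s y := countBelow_mono s (Fin.lt_def.1 hxy)

lemma countBelow_lt_card {x : Fin k} (hx : x ∈ s) : countBelow s x < #s :=
  calc countBelow s x < countBelow s (x + 1) := by simp [countBelow_succ, hx]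
    _ ≤ #s := countBelow_le_card s _

lemma countBelow_injOn : Set.InjOn (fun x : Fin k => countBelow s x) s := by
  intro x hx y hy h
  by_contra hne
  rcases lt_or_gt_of_ne hne with hxy | hyx
  · exact (countBelow_lt_countBelow s hx hxy).ne h
  · exact (countBelow_lt_countBelow s hy hyx).ne' h

lemma exists_countBelow_eq {r : ℕ} (hr : r < #s) : ∃ x ∈ s, countBelow s x = r := by
  have hsurj := surjOn_of_injOn_of_card_le (fun x : Fin k => countBelow s x)
    (t := range #s) (fun x hx => mem_range.2 (countBelow_lt_card s hx))
    (countBelow_injOn s) (by rw [card_range])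
  exact hsurj (mem_range.2 hr)

end Finset

namespace CliqueDyck

section Word

variable {k : ℕ}

def evenPos (x : Fin k) : Fin (2 * k) := ⟨2 * x, by omega⟩

def oddPos (x : Fin k) : Fin (2 * k) := ⟨2 * x + 1, by omega⟩

def vertex (i : Fin (2 * k)) : Fin k := ⟨i / 2, by omega⟩

lemma vertex_oddPos (x : Fin k) : vertex (oddPos x) = x := Fin.ext (by simp [vertex, oddPos]; omega)

lemma vertex_evenPos (x : Fin k) : vertex (evenPos x) = x := Fin.ext (by simp [vertex, evenPos])

lemma oddPos_vertex {i : Fin (2 * k)} (hi : (i : ℕ) % 2 = 1) : oddPos (vertex i) = i :=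
  Fin.ext (by simp only [oddPos, vertex]; omega)

lemma evenPos_vertex {i : Fin (2 * k)} (hi : ¬(i : ℕ) % 2 = 1) : evenPos (vertex i) = i :=
  Fin.ext (by simp only [evenPos, vertex]; omega)

lemma countBelow_filter_eq (w : Fin k → Bool) (b : Bool) (j : ℕ) :
    countBelow {i | w i = b} j = #(univ.filter fun i : Fin k => (i : ℕ) < j ∧ w i = b) := by
  rw [countBelow, filter_filter]
  simp only [and_comm]

def wordOf (L R : Finset (Fin k)) (i : Fin (2 * k)) : Bool :=
  if (i : ℕ) % 2 = 1 then decide (vertex i ∈ L) else decide (vertex i ∉ R)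

def oddUps (w : Fin (2 * k) → Bool) : Finset (Fin k) := {x | w (oddPos x) = true}

def evenDowns (w : Fin (2 * k) → Bool) : Finset (Fin k) := {x | w (evenPos x) = false}

variable (L R : Finset (Fin k))

lemma wordOf_oddPos (x : Fin k) : wordOf L R (oddPos x) = decide (x ∈ L) := by
  rw [wordOf, if_pos (by simp [oddPos]), vertex_oddPos]

lemma wordOf_evenPos (x : Fin k) : wordOf L R (evenPos x) = decide (x ∉ R) := by
  rw [wordOf, if_neg (by simp [evenPos]), vertex_evenPos]

lemma wordOf_eq_true_iff_of_odd {i : Fin (2 * k)} (hi : (i : ℕ) % 2 = 1) :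
    wordOf L R i = true ↔ vertex i ∈ L := by
  rw [wordOf, if_pos hi, decide_eq_true_iff]

lemma natCard_wordOf_true_odd :
    Nat.card {i : Fin (2 * k) // wordOf L R i = true ∧ (i : ℕ) % 2 = 1} = #L := by
  rw [← Nat.card_eq_finsetCard]
  exact Nat.card_congr
    { toFun := fun i => ⟨vertex i.1, (wordOf_eq_true_iff_of_odd L R i.2.2).1 i.2.1⟩
      invFun := fun x => ⟨oddPos x.1, ⟨by simp [wordOf_oddPos, x.2], by simp [oddPos]⟩⟩
      left_inv := fun i => Subtype.ext (oddPos_vertex i.2.2)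
      right_inv := fun x => Subtype.ext (vertex_oddPos x.1) }

lemma oddUps_wordOf : oddUps (wordOf L R) = L := by
  ext x; simp [oddUps, wordOf_oddPos]

lemma evenDowns_wordOf : evenDowns (wordOf L R) = R := by
  ext x; simp [evenDowns, wordOf_evenPos]

lemma wordOf_oddUps_evenDowns (w : Fin (2 * k) → Bool) : wordOf (oddUps w) (evenDowns w) = w := by
  funext i
  by_cases hi : (i : ℕ) % 2 = 1
  · rw [← oddPos_vertex hi, wordOf_oddPos]; simp [oddUps]
  · rw [← evenPos_vertex hi, wordOf_evenPos]; simp [evenDowns]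

lemma countBelow_wordOf {m : ℕ} (hm : m ≤ k) :
    countBelow {i | wordOf L R i = true} (2 * m) + countBelow R m = m + countBelow L m ∧
    countBelow {i | wordOf L R i = false} (2 * m) + countBelow L m = m + countBelow R m := by
  induction m with
  | zero => simp [countBelow_zero]
  | succ m ih =>
    obtain ⟨ihT, ihF⟩ := ih (by omega)
    obtain ⟨x, rfl⟩ : ∃ x : Fin k, x.val = m := ⟨⟨m, by omega⟩, rfl⟩
    rw [show 2 * (x.val + 1) = (oddPos x : ℕ) + 1 by simp [oddPos]; ring,
      countBelow_succ _ (oddPos x), countBelow_succ _ (oddPos x),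
      show (oddPos x : ℕ) = evenPos x + 1 from rfl,
      countBelow_succ _ (evenPos x), countBelow_succ _ (evenPos x),
      show (evenPos x : ℕ) = 2 * x from rfl, countBelow_succ L, countBelow_succ R]
    simp only [mem_filter, mem_univ, true_and, wordOf_oddPos, wordOf_evenPos]
    by_cases hL : x ∈ L <;> by_cases hR : x ∈ R <;> simp [hL, hR] <;> omega

lemma card_wordOf_true : #{i | wordOf L R i = true} + #R = k + #L := by
  have h := (countBelow_wordOf L R le_rfl).1
  rwa [countBelow_of_le _ le_rfl, countBelow_of_le _ le_rfl, countBelow_of_le _ le_rfl] at h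

def Dominates : Prop := ∀ m : ℕ, countBelow R (m + 1) ≤ countBelow L m

variable {L R}

lemma Dominates.countBelow_le (hD : Dominates L R) (m : ℕ) : countBelow R m ≤ countBelow L m :=
  (countBelow_mono R m.le_succ).trans (hD m)

lemma isDyckPrefix_wordOf_iff (hLR : #L = #R) :
    (∀ j, countBelow {i | wordOf L R i = false} j ≤ countBelow {i | wordOf L R i = true} j) ↔
      Dominates L R := by
  constructor
  · intro hpre m
    rcases le_or_gt k m with hm | hm
    · rw [countBelow_of_le _ (by omega), countBelow_of_le _ hm, hLR]
    obtain ⟨x, rfl⟩ : ∃ x : Fin k, x.val = m := ⟨⟨m, hm⟩, rfl⟩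
    obtain ⟨hT, hF⟩ := countBelow_wordOf L R hm.le
    have heven := hpre (2 * x)
    have hodd := hpre ((evenPos x : ℕ) + 1)
    rw [countBelow_succ, countBelow_succ, show (evenPos x : ℕ) = 2 * x from rfl] at hodd
    rw [countBelow_succ]
    simp only [mem_filter, mem_univ, true_and, wordOf_evenPos] at hodd
    by_cases hR : x ∈ R <;> simp [hR] at hodd ⊢ <;> omega
  · intro hD j
    rw [← countBelow_min, ← countBelow_min {i | wordOf L R i = true}]
    obtain ⟨m, hm | hm⟩ := Nat.even_or_odd' (min j (2 * k))
    · obtain ⟨hT, hF⟩ := countBelow_wordOf L R (m := m) (by omega)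
      have := hD.countBelow_le m
      rw [hm]
      omega
    obtain ⟨x, rfl⟩ : ∃ x : Fin k, x.val = m := ⟨⟨m, by omega⟩, rfl⟩
    obtain ⟨hT, hF⟩ := countBelow_wordOf L R x.isLt.le
    have hdom := hD x
    rw [hm, show 2 * x.val + 1 = (evenPos x : ℕ) + 1 from rfl, countBelow_succ, countBelow_succ,
      show (evenPos x : ℕ) = 2 * x from rfl]
    rw [countBelow_succ] at hdom
    simp only [mem_filter, mem_univ, true_and, wordOf_evenPos]
    by_cases hR : x ∈ R <;> simp [hR] at hdom ⊢ <;> omega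

lemma Dominates.lt_of_countBelow_eq (hD : Dominates L R) {x y : Fin k} (hy : y ∈ R)
    (h : L.countBelow x = R.countBelow y) : x < y := by
  by_contra hxy
  have hstep := hD y
  rw [countBelow_succ, if_pos hy] at hstep
  have := L.countBelow_mono (not_lt.1 hxy)
  omega

end Word

section Matching

variable {n : ℕ} {L R : Finset (Fin (n + 1))}

def IsMatched (L R : Finset (Fin (n + 1))) (a : Arc n) : Prop :=
  a.val.1 ∈ L ∧ a.val.2 ∈ R ∧ L.countBelow a.val.1 = R.countBelow a.val.2

instance (L R : Finset (Fin (n + 1))) : DecidablePred (IsMatched L R) := fun _ =>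
  inferInstanceAs (Decidable (_ ∧ _ ∧ _))

lemma IsMatched.eq_of_le {a b : Arc n} (ha : IsMatched L R a) (hb : IsMatched L R b)
    (h1 : a.val.1 ≤ b.val.1) (h2 : b.val.2 ≤ a.val.2) : a = b := by
  have hL := L.countBelow_mono h1
  have hR := R.countBelow_mono h2
  have ha' := ha.2.2
  have hb' := hb.2.2
  have hfst : a.val.1 = b.val.1 := L.countBelow_injOn ha.1 hb.1 (by dsimp; omega)
  have hsnd : a.val.2 = b.val.2 := R.countBelow_injOn ha.2.1 hb.2.1 (by dsimp; omega)
  exact Subtype.ext (Prod.ext hfst hsnd)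

lemma exists_isMatched_fst (hLR : #L = #R) (hD : Dominates L R) {x : Fin (n + 1)}
    (hx : x ∈ L) : ∃ a : Arc n, IsMatched L R a ∧ a.val.1 = x := by
  obtain ⟨y, hy, hxy⟩ := R.exists_countBelow_eq (hLR ▸ L.countBelow_lt_card hx)
  exact ⟨⟨(x, y), hD.lt_of_countBelow_eq hy hxy.symm⟩, ⟨hx, hy, hxy.symm⟩, rfl⟩

lemma exists_isMatched_snd (hLR : #L = #R) (hD : Dominates L R) {y : Fin (n + 1)}
    (hy : y ∈ R) : ∃ a : Arc n, IsMatched L R a ∧ a.val.2 = y := by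
  obtain ⟨x, hx, hxy⟩ := L.exists_countBelow_eq (hLR ▸ R.countBelow_lt_card hy)
  exact ⟨⟨(x, y), hD.lt_of_countBelow_eq hy hxy⟩, ⟨hx, hy, hxy⟩, rfl⟩

end Matching

section Clique

variable {n : ℕ} {M : Type}

instance : Fintype (Arc n) :=
  inferInstanceAs (Fintype {a : Fin (n + 1) × Fin (n + 1) // a.1 < a.2})

open Classical in
noncomputable def solidArcs [One M] (p : Arc n → M) : Finset (Arc n) := {a | p a ≠ 1}

noncomputable def leftEnds [One M] (p : Arc n → M) : Finset (Fin (n + 1)) :=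
  (solidArcs p).image (·.val.1)

noncomputable def rightEnds [One M] (p : Arc n → M) : Finset (Fin (n + 1)) :=
  (solidArcs p).image (·.val.2)

variable [One M] {p : Arc n → M}

lemma mem_solidArcs {a : Arc n} : a ∈ solidArcs p ↔ p a ≠ 1 := by simp [solidArcs]

lemma mem_leftEnds {x : Fin (n + 1)} : x ∈ leftEnds p ↔ ∃ a, p a ≠ 1 ∧ a.val.1 = x := by
  simp [leftEnds, mem_solidArcs]

lemma mem_rightEnds {y : Fin (n + 1)} : y ∈ rightEnds p ↔ ∃ a, p a ≠ 1 ∧ a.val.2 = y := by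
  simp [rightEnds, mem_solidArcs]

noncomputable def solidArcFrom {x : Fin (n + 1)} (hx : x ∈ leftEnds p) : Arc n :=
  (mem_leftEnds.1 hx).choose

lemma solidArcFrom_ne_one {x : Fin (n + 1)} (hx : x ∈ leftEnds p) : p (solidArcFrom hx) ≠ 1 :=
  (mem_leftEnds.1 hx).choose_spec.1

lemma solidArcFrom_fst {x : Fin (n + 1)} (hx : x ∈ leftEnds p) : (solidArcFrom hx).val.1 = x :=
  (mem_leftEnds.1 hx).choose_spec.2

lemma leftEnds_eq_of_isMatched {L R : Finset (Fin (n + 1))} (hLR : #L = #R)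
    (hD : Dominates L R) (hp : ∀ a, p a ≠ 1 ↔ IsMatched L R a) : leftEnds p = L := by
  ext x
  rw [mem_leftEnds]
  constructor
  · rintro ⟨a, ha, rfl⟩
    exact ((hp a).1 ha).1
  · intro hx
    obtain ⟨a, ha, rfl⟩ := exists_isMatched_fst hLR hD hx
    exact ⟨a, (hp a).2 ha, rfl⟩

lemma rightEnds_eq_of_isMatched {L R : Finset (Fin (n + 1))} (hLR : #L = #R)
    (hD : Dominates L R) (hp : ∀ a, p a ≠ 1 ↔ IsMatched L R a) : rightEnds p = R := by
  ext y
  rw [mem_rightEnds]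
  constructor
  · rintro ⟨a, ha, rfl⟩
    exact ((hp a).1 ha).2.1
  · intro hy
    obtain ⟨a, ha, rfl⟩ := exists_isMatched_snd hLR hD hy
    exact ⟨a, (hp a).2 ha, rfl⟩

end Clique

end CliqueDyck

namespace InclusionFree

open CliqueDyck

variable {M : Type} [One M] {n : ℕ} {p : Arc n → M}

lemma eq_of_fst_eq (hp : InclusionFree p) {a b : Arc n} (ha : p a ≠ 1) (hb : p b ≠ 1)
    (h : a.val.1 = b.val.1) : a = b := by
  rcases le_total a.val.2 b.val.2 with h2 | h2
  · exact (hp b a hb ha h.ge h2).symm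
  · exact hp a b ha hb h.le h2

lemma eq_of_snd_eq (hp : InclusionFree p) {a b : Arc n} (ha : p a ≠ 1) (hb : p b ≠ 1)
    (h : a.val.2 = b.val.2) : a = b := by
  rcases le_total a.val.1 b.val.1 with h1 | h1
  · exact hp a b ha hb h1 h.ge
  · exact (hp b a hb ha h1 h.le).symm

lemma fst_lt_fst_iff (hp : InclusionFree p) {a b : Arc n} (ha : p a ≠ 1) (hb : p b ≠ 1) :
    a.val.1 < b.val.1 ↔ a.val.2 < b.val.2 := by
  constructor
  · intro h
    by_contra h'
    exact h.ne (congrArg (·.val.1) (hp a b ha hb h.le (not_lt.1 h')))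
  · intro h
    by_contra h'
    exact h.ne' (congrArg (·.val.2) (hp b a hb ha (not_lt.1 h') h.le))

lemma solidArcFrom_eq (hp : InclusionFree p) {x : Fin (n + 1)} (hx : x ∈ leftEnds p)
    {a : Arc n} (ha : p a ≠ 1) (hax : a.val.1 = x) : solidArcFrom hx = a :=
  hp.eq_of_fst_eq (solidArcFrom_ne_one hx) ha ((solidArcFrom_fst hx).trans hax.symm)

lemma card_leftEnds (hp : InclusionFree p) : #(leftEnds p) = #(solidArcs p) :=
  card_image_of_injOn fun _ ha _ hb h =>
    hp.eq_of_fst_eq (mem_solidArcs.1 ha) (mem_solidArcs.1 hb) h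

lemma card_rightEnds (hp : InclusionFree p) : #(rightEnds p) = #(solidArcs p) :=
  card_image_of_injOn fun _ ha _ hb h =>
    hp.eq_of_snd_eq (mem_solidArcs.1 ha) (mem_solidArcs.1 hb) h

lemma countBelow_leftEnds (hp : InclusionFree p) (m : ℕ) :
    (leftEnds p).countBelow m = #{a ∈ solidArcs p | (a.val.1 : ℕ) < m} := by
  rw [countBelow, leftEnds, filter_image]
  exact card_image_of_injOn fun _ ha _ hb h =>
    hp.eq_of_fst_eq (mem_solidArcs.1 (mem_filter.1 ha).1) (mem_solidArcs.1 (mem_filter.1 hb).1) h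

lemma countBelow_rightEnds (hp : InclusionFree p) (m : ℕ) :
    (rightEnds p).countBelow m = #{a ∈ solidArcs p | (a.val.2 : ℕ) < m} := by
  rw [countBelow, rightEnds, filter_image]
  exact card_image_of_injOn fun _ ha _ hb h =>
    hp.eq_of_snd_eq (mem_solidArcs.1 (mem_filter.1 ha).1) (mem_solidArcs.1 (mem_filter.1 hb).1) h

lemma dominates (hp : InclusionFree p) : Dominates (leftEnds p) (rightEnds p) := by
  intro m
  rw [hp.countBelow_rightEnds, hp.countBelow_leftEnds]
  refine card_le_card (monotone_filter_right _ fun a _ h => ?_)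
  have := Fin.lt_def.1 a.prop
  omega

lemma countBelow_leftEnds_eq (hp : InclusionFree p) {a : Arc n} (ha : p a ≠ 1) :
    (leftEnds p).countBelow a.val.1 = (rightEnds p).countBelow a.val.2 := by
  rw [hp.countBelow_leftEnds, hp.countBelow_rightEnds]
  exact congrArg card (filter_congr fun b hb => hp.fst_lt_fst_iff (mem_solidArcs.1 hb) ha)

lemma isMatched_iff (hp : InclusionFree p) (a : Arc n) :
    IsMatched (leftEnds p) (rightEnds p) a ↔ p a ≠ 1 := by
  constructor
  · rintro ⟨hx, hy, hcount⟩
    obtain ⟨b, hb, hba⟩ := mem_leftEnds.1 hx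
    have hsnd : b.val.2 = a.val.2 := (rightEnds p).countBelow_injOn
      (mem_rightEnds.2 ⟨b, hb, rfl⟩) hy (by
        dsimp only
        rw [← hp.countBelow_leftEnds_eq hb, hba, hcount])
    rwa [← Subtype.ext (Prod.ext hba hsnd)]
  · intro ha
    exact ⟨mem_leftEnds.2 ⟨a, ha, rfl⟩, mem_rightEnds.2 ⟨a, ha, rfl⟩,
      hp.countBelow_leftEnds_eq ha⟩

lemma natCard_solid (hp : InclusionFree p) : Nat.card {a // p a ≠ 1} = #(leftEnds p) := by
  rw [hp.card_leftEnds, ← Nat.card_eq_finsetCard]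
  exact Nat.card_congr (Equiv.subtypeEquivRight fun _ => mem_solidArcs.symm)

noncomputable def toColoredDyck (hp : InclusionFree p) : ColoredDyck M n where
  w := wordOf (leftEnds p) (rightEnds p)
  balanced := by
    have := card_wordOf_true (leftEnds p) (rightEnds p)
    rw [hp.card_leftEnds, hp.card_rightEnds] at this
    omega
  prefixCond j := by
    rw [← countBelow_filter_eq, ← countBelow_filter_eq]
    exact (isDyckPrefix_wordOf_iff (hp.card_leftEnds.trans hp.card_rightEnds.symm)).2 hp.dominates j
  color i hw hodd :=
    have hx := (wordOf_eq_true_iff_of_odd _ _ hodd).1 hw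
    ⟨p (solidArcFrom hx), solidArcFrom_ne_one hx⟩

end InclusionFree

namespace ColoredDyck

open CliqueDyck

variable {M : Type} [One M] {n : ℕ}

lemma ext_of_color {d d' : ColoredDyck M n} (hw : d.w = d'.w)
    (hc : ∀ i h h', (d.color i h h').val = (d'.color i (hw ▸ h) h').val) : d = d' := by
  obtain ⟨w, _, _, c⟩ := d
  obtain ⟨w', _, _, c'⟩ := d'
  dsimp only at hw hc
  subst hw
  obtain rfl : c = c' := funext fun i => funext fun h => funext fun h' => Subtype.ext (hc i h h')
  rfl

lemma color_congr (d : ColoredDyck M n) {i j : Fin (2 * (n + 1))} (hij : i = j)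
    (hi : d.w i = true) (hi' : (i : ℕ) % 2 = 1) (hj : d.w j = true) (hj' : (j : ℕ) % 2 = 1) :
    (d.color i hi hi').val = (d.color j hj hj').val := by
  subst hij
  rfl

lemma card_oddUps (d : ColoredDyck M n) : #(oddUps d.w) = #(evenDowns d.w) := by
  have := card_wordOf_true (oddUps d.w) (evenDowns d.w)
  rw [wordOf_oddUps_evenDowns, d.balanced] at this
  omega

lemma dominates (d : ColoredDyck M n) : Dominates (oddUps d.w) (evenDowns d.w) := by
  refine (isDyckPrefix_wordOf_iff d.card_oddUps).1 fun j => ?_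
  rw [wordOf_oddUps_evenDowns, countBelow_filter_eq, countBelow_filter_eq]
  exact d.prefixCond j

def toClique (d : ColoredDyck M n) (a : Arc n) : M :=
  if h : IsMatched (oddUps d.w) (evenDowns d.w) a then
    (d.color (oddPos a.val.1) (by simpa [oddUps] using h.1) (by simp [oddPos])).val
  else 1

lemma toClique_ne_one_iff (d : ColoredDyck M n) (a : Arc n) :
    d.toClique a ≠ 1 ↔ IsMatched (oddUps d.w) (evenDowns d.w) a := by
  unfold toClique
  split_ifs with h
  · simpa [h] using (d.color _ _ _).prop
  · simp [h]

lemma inclusionFree_toClique (d : ColoredDyck M n) : InclusionFree d.toClique :=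
  fun a b ha hb => ((d.toClique_ne_one_iff a).1 ha).eq_of_le ((d.toClique_ne_one_iff b).1 hb)

lemma leftEnds_toClique (d : ColoredDyck M n) : leftEnds d.toClique = oddUps d.w :=
  leftEnds_eq_of_isMatched d.card_oddUps d.dominates d.toClique_ne_one_iff

lemma rightEnds_toClique (d : ColoredDyck M n) : rightEnds d.toClique = evenDowns d.w :=
  rightEnds_eq_of_isMatched d.card_oddUps d.dominates d.toClique_ne_one_iff

lemma toColoredDyck_toClique (d : ColoredDyck M n) :
    d.inclusionFree_toClique.toColoredDyck = d := by
  have hw : d.inclusionFree_toClique.toColoredDyck.w = d.w := by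
    show wordOf (leftEnds d.toClique) (rightEnds d.toClique) = d.w
    rw [leftEnds_toClique, rightEnds_toClique, wordOf_oddUps_evenDowns]
  refine ext_of_color hw fun i h h' => ?_
  have hx := (wordOf_eq_true_iff_of_odd _ _ h').1 h
  have hmatch := (d.toClique_ne_one_iff _).1 (solidArcFrom_ne_one hx)
  show d.toClique (solidArcFrom hx) = _
  rw [toClique, dif_pos hmatch]
  exact d.color_congr (by rw [solidArcFrom_fst, oddPos_vertex h']) _ _ _ _

end ColoredDyck

namespace InclusionFree

open CliqueDyck

variable {M : Type} [One M] {n : ℕ} {p : Arc n → M}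

lemma toClique_toColoredDyck (hp : InclusionFree p) : hp.toColoredDyck.toClique = p := by
  funext a
  have hmatch : IsMatched (oddUps hp.toColoredDyck.w) (evenDowns hp.toColoredDyck.w) a ↔
      p a ≠ 1 := by
    rw [toColoredDyck, oddUps_wordOf, evenDowns_wordOf, hp.isMatched_iff]
  by_cases ha : p a = 1
  · rw [ha]
    by_contra hne
    exact hmatch.1 ((hp.toColoredDyck.toClique_ne_one_iff a).1 hne) ha
  · rw [ColoredDyck.toClique, dif_pos (hmatch.2 ha)]
    exact congrArg p (hp.solidArcFrom_eq _ ha (vertex_oddPos _).symm)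

end InclusionFree

noncomputable def cliqueEquiv (M : Type) [One M] (n : ℕ) :
    {p : Arc n → M // InclusionFree p} ≃ ColoredDyck M n where
  toFun p := p.2.toColoredDyck
  invFun d := ⟨d.toClique, d.inclusionFree_toClique⟩
  left_inv p := Subtype.ext p.2.toClique_toColoredDyck
  right_inv := ColoredDyck.toColoredDyck_toClique

theorem inclusion_free_cliques_equiv_colored_dyck_general (M : Type) [MulOneClass M] (n : ℕ) :
    ∃ φ : {p : Arc n → M // InclusionFree p} ≃ ColoredDyck M n,
      ∀ p : {p : Arc n → M // InclusionFree p},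
        Nat.card {a : Arc n // p.val a ≠ 1} =
          Nat.card {i : Fin (2 * (n + 1)) // (φ p).w i = true ∧ (i : ℕ) % 2 = 1} :=
  ⟨cliqueEquiv M n, fun p =>
    p.2.natCard_solid.trans (CliqueDyck.natCard_wordOf_true_odd _ _).symm⟩

/-- For a finite unitary magma `M` and `n ≥ 2`, the set of inclusion-free
`M`-cliques of arity `n` is in bijection with the set of Dyck paths of size
`n + 1` whose letters `a` at even positions are colored by non-unit elements of
`M`; moreover the bijection sends cliques with exactly `k` solid arcs to paths
with exactly `k` letters `a` at even positions. -/
theorem inclusion_free_cliques_equiv_colored_dyck (M : Type) [MulOneClass M]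
    [Fintype M] (n : ℕ) (hn : 2 ≤ n) :
    ∃ φ : {p : Arc n → M // InclusionFree p} ≃ ColoredDyck M n,
      ∀ p : {p : Arc n → M // InclusionFree p},
        Nat.card {a : Arc n // p.val a ≠ 1} =
          Nat.card {i : Fin (2 * (n + 1)) // (φ p).w i = true ∧ (i : ℕ) % 2 = 1} :=
  inclusion_free_cliques_equiv_colored_dyck_general M n
end

section
/- For a finite unitary magma M with m = #M, the ordinary generating function H(t) = Σ_{n≥1} (number of noncrossing M-cliques of arity n) t^n satisfies the algebraic equation t + (m³ - 2m² + 2m - 1)t² + (2m²t - 3mt + 2t - 1)H(t) + (m - 1)H(t)² = 0. -/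
/-- An `M`-clique is noncrossing if no two solid diagonals cross: there are no
arcs `a`, `b` labeled by non-unit elements with `a₁ < b₁ < a₂ < b₂`. -/
def Noncrossing {M : Type} [One M] {n : ℕ} (p : Arc n → M) : Prop :=
  ∀ a b : Arc n, p a ≠ 1 → p b ≠ 1 →
    ¬(a.val.1 < b.val.1 ∧ b.val.1 < a.val.2 ∧ a.val.2 < b.val.2)

/-- The ordinary generating function `H(t) = ∑_{n ≥ 1} (#noncrossing M-cliques
of arity n) tⁿ` (by convention, the unique noncrossing `M`-clique of arity `1`
is the one whose base is labeled by the unit, so the coefficient of `t` is `1`). -/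
noncomputable def ncSeries (M : Type) [One M] : PowerSeries ℚ :=
  PowerSeries.mk fun n =>
    if n = 0 then 0
    else if n = 1 then 1
    else (Nat.card {p : Arc n → M // Noncrossing p} : ℚ)

lemma Nat.card_subtype_ne {α : Type*} [Finite α] (c : α) :
    Nat.card {a // a ≠ c} = Nat.card α - 1 := by
  classical
  have := Fintype.ofFinite α
  simp [Nat.card_eq_fintype_card]

/-- A noncrossing `M`-clique of arity `n`: the arc `(x, y)`, `x < y ≤ n`, is labeled `label x y`,
and every other pair of naturals carries the unit. -/
@[ext]
structure NCClique (M : Type) [One M] (n : ℕ) where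
  label : ℕ → ℕ → M
  noncrossing : ∀ a b c d, a < b → b < c → c < d → d ≤ n → label a c ≠ 1 → label b d ≠ 1 → False
  label_eq_one : ∀ x y, ¬(x < y ∧ y ≤ n) → label x y = 1

namespace NCClique

variable {M : Type} [One M] {n : ℕ}

def equivArcLabeling : {p : Arc n → M // Noncrossing p} ≃ NCClique M n where
  toFun p :=
    { label x y := if h : x < y ∧ y ≤ n then p.1 ⟨(⟨x, by omega⟩, ⟨y, by omega⟩), h.1⟩ else 1
      noncrossing a b c d hab hbc hcd hd hac hbd := by
        rw [dif_pos (by omega)] at hac hbd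
        exact p.2 _ _ hac hbd ⟨hab, hbc, hcd⟩
      label_eq_one x y h := dif_neg h }
  invFun q := ⟨fun a => q.label a.1.1 a.1.2, fun a b hab hba ⟨h₁, h₂, h₃⟩ =>
    q.noncrossing _ _ _ _ h₁ h₂ h₃ (Nat.lt_succ_iff.mp b.1.2.isLt) hab hba⟩
  left_inv p := by
    ext ⟨⟨x, y⟩, hxy⟩
    exact dif_pos ⟨hxy, Nat.lt_succ_iff.mp y.isLt⟩
  right_inv q := by
    ext x y
    dsimp only
    split_ifs with h
    · rfl
    · exact (q.label_eq_one x y h).symm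

instance [Finite M] : Finite (NCClique M n) :=
  have : Finite (Arc n) := inferInstanceAs (Finite {a : Fin (n + 1) × Fin (n + 1) // a.1 < a.2})
  Finite.of_equiv _ equivArcLabeling

lemma card_zero : Nat.card (NCClique M 0) = 1 := by
  refine Nat.card_eq_one_iff_unique.mpr
    ⟨⟨fun q q' => ?_⟩, ⟨⟨fun _ _ => 1, by omega, fun _ _ _ => rfl⟩⟩⟩
  ext x y
  rw [q.label_eq_one x y (by omega), q'.label_eq_one x y (by omega)]

def restrict (k : ℕ) (hk : k ≤ n) (q : NCClique M n) : NCClique M k where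
  label x y := if y ≤ k then q.label x y else 1
  noncrossing a b c d hab hbc hcd hd hac hbd := by
    rw [if_pos (by omega)] at hac hbd
    exact q.noncrossing a b c d hab hbc hcd (by omega) hac hbd
  label_eq_one x y h := by
    split_ifs
    · exact q.label_eq_one x y (by omega)
    · rfl

def withBase (c : M) (q : NCClique M n) : NCClique M (n + 1) where
  label x y := if x = 0 ∧ y = n + 1 then c else q.label x y
  noncrossing a b c d hab hbc hcd hd hac hbd := by
    rw [if_neg (by omega)] at hac hbd
    have hd : d ≤ n := by
      by_contra h
      exact hbd (q.label_eq_one b d (by omega))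
    exact q.noncrossing a b c d hab hbc hcd hd hac hbd
  label_eq_one x y h := by
    rw [if_neg (by omega)]
    exact q.label_eq_one x y (by omega)

def equivNoSolidToLast :
    {q : NCClique M (n + 1) // ∀ a, 1 ≤ a → a ≤ n → q.label a (n + 1) = 1} ≃
      M × NCClique M n where
  toFun q := (q.1.label 0 (n + 1), q.1.restrict n n.le_succ)
  invFun p := ⟨p.2.withBase p.1, fun a ha han => by
    simp only [withBase]
    rw [if_neg (by omega)]
    exact p.2.label_eq_one a (n + 1) (by omega)⟩
  left_inv := by
    rintro ⟨q, hq⟩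
    ext x y
    simp only [withBase, restrict]
    split_ifs with h₀ hy
    · rw [h₀.1, h₀.2]
    · rfl
    · by_cases hx : 1 ≤ x ∧ x ≤ n ∧ y = n + 1
      · rw [hx.2.2, hq x hx.1 hx.2.1]
      · exact (q.label_eq_one x y (by omega)).symm
  right_inv := by
    rintro ⟨c, q⟩
    ext x y
    · simp [withBase]
    · simp only [withBase, restrict]
      split_ifs
      · omega
      · rfl
      · exact (q.label_eq_one x y (by omega)).symm

/-- The part of `q` on the vertices `j, …, n + 1`, whose base carries the label of the base
`(0, n + 1)` of `q` rather than that of `(j, n + 1)`. -/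
def rightPart (j : ℕ) (hj : j ≤ n) (q : NCClique M (n + 1)) : NCClique M (n + 1 - j) where
  label x y := if x = 0 ∧ y = n + 1 - j then q.label 0 (n + 1) else q.label (x + j) (y + j)
  noncrossing a b c d hab hbc hcd hd hac hbd := by
    rw [if_neg (by omega)] at hac hbd
    exact q.noncrossing (a + j) (b + j) (c + j) (d + j) (by omega) (by omega) (by omega)
      (by omega) hac hbd
  label_eq_one x y h := by
    rw [if_neg (by omega)]
    exact q.label_eq_one _ _ (by omega)

def glue (j : ℕ) (hj : j ≤ n) (s : M) (L : NCClique M j) (R : NCClique M (n + 1 - j)) :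
    NCClique M (n + 1) where
  label x y :=
    if y ≤ j then L.label x y
    else if x = j ∧ y = n + 1 then s
    else if j ≤ x then R.label (x - j) (y - j)
    else if x = 0 ∧ y = n + 1 then R.label 0 (n + 1 - j)
    else 1
  noncrossing a b c d hab hbc hcd hd hac hbd := by
    split_ifs at hac hbd <;> first
      | omega | exact hac rfl | exact hbd rfl
      | exact L.noncrossing a b c d hab hbc hcd (by omega) hac hbd
      | exact R.noncrossing (a - j) (b - j) (c - j) (d - j) (by omega) (by omega) (by omega)
          (by omega) hac hbd
  label_eq_one x y h := by
    split_ifs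
    · exact L.label_eq_one x y (by omega)
    · omega
    · exact R.label_eq_one _ _ (by omega)
    · omega
    · rfl

def equivFirstSolidToLast (j : ℕ) (hj₁ : 1 ≤ j) (hj : j ≤ n) :
    {q : NCClique M (n + 1) //
        q.label j (n + 1) ≠ 1 ∧ ∀ a, 1 ≤ a → a < j → q.label a (n + 1) = 1} ≃
      {s : M // s ≠ 1} × NCClique M j × NCClique M (n + 1 - j) where
  toFun q := (⟨q.1.label j (n + 1), q.2.1⟩, q.1.restrict j (by omega), q.1.rightPart j hj)
  invFun p := ⟨glue j hj p.1 p.2.1 p.2.2, by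
    refine ⟨?_, fun a ha haj => ?_⟩
    · simp only [glue]
      rw [if_neg (by omega), if_pos (by simp)]
      exact p.1.2
    · simp only [glue]
      rw [if_neg (by omega), if_neg (by omega), if_neg (by omega), if_neg (by omega)]⟩
  left_inv := by
    rintro ⟨q, hsolid, hfirst⟩
    ext x y
    simp only [glue, restrict, rightPart, and_self, ↓reduceIte]
    split_ifs
    any_goals (congr 1 <;> omega)
    -- `x < j < y` and `(x, y)` is not the base: `(x, y)` crosses `(j, n + 1)`, precedes it at the
    -- last vertex, or is not an arc
    obtain hy | rfl | hy := lt_trichotomy y (n + 1)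
    · by_contra hne
      exact q.noncrossing x j y (n + 1) (by omega) (by omega) hy le_rfl (Ne.symm hne) hsolid
    · exact (hfirst x (by omega) (by omega)).symm
    · exact (q.label_eq_one x y (by omega)).symm
  right_inv := by
    rintro ⟨s, L, R⟩
    ext x y
    · simp [glue, show ¬n < j by omega]
    · simp only [glue, restrict]
      split_ifs
      · rfl
      · exact (L.label_eq_one x y (by omega)).symm
    · simp only [glue, rightPart, and_self, ↓reduceIte]
      split_ifs <;> first
        | omega
        | (congr 1 <;> omega)
        | rw [L.label_eq_one _ _ (by omega), R.label_eq_one _ _ (by omega)]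

section
open Classical

noncomputable def firstSolidToLast (q : NCClique M (n + 1)) : ℕ :=
  if h : ∃ a, 1 ≤ a ∧ a ≤ n ∧ q.label a (n + 1) ≠ 1 then Nat.find h else 0

lemma firstSolidToLast_le (q : NCClique M (n + 1)) : q.firstSolidToLast ≤ n := by
  unfold firstSolidToLast
  split_ifs with h
  · exact (Nat.find_spec h).2.1
  · exact n.zero_le

lemma firstSolidToLast_eq_zero_iff (q : NCClique M (n + 1)) :
    q.firstSolidToLast = 0 ↔ ∀ a, 1 ≤ a → a ≤ n → q.label a (n + 1) = 1 := by
  unfold firstSolidToLast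
  split_ifs with h
  · obtain ⟨a, ha₁, han, ha⟩ := h
    simp only [Nat.find_eq_zero, Nat.le_zero, one_ne_zero, false_and, false_iff]
    exact fun hall => ha (hall a ha₁ han)
  · push Not at h
    simpa using h

lemma firstSolidToLast_eq_iff (q : NCClique M (n + 1)) {j : ℕ} (hj₁ : 1 ≤ j) (hj : j ≤ n) :
    q.firstSolidToLast = j ↔
      q.label j (n + 1) ≠ 1 ∧ ∀ a, 1 ≤ a → a < j → q.label a (n + 1) = 1 := by
  unfold firstSolidToLast
  split_ifs with h
  · rw [Nat.find_eq_iff]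
    refine ⟨fun ⟨hjs, hmin⟩ => ⟨hjs.2.2, fun a ha haj => ?_⟩,
      fun ⟨hjs, hmin⟩ => ⟨⟨hj₁, hj, hjs⟩, fun a haj ha => ha.2.2 (hmin a ha.1 haj)⟩⟩
    by_contra hne
    exact hmin a haj ⟨ha, by omega, hne⟩
  · push Not at h
    exact ⟨by omega, fun hjs => (hjs.1 (h j hj₁ hj)).elim⟩

end

theorem card_succ [Finite M] (n : ℕ) :
    Nat.card (NCClique M (n + 1)) = Nat.card M * Nat.card (NCClique M n) +
      (Nat.card M - 1) *
        ∑ i ∈ Finset.range n, Nat.card (NCClique M (i + 1)) * Nat.card (NCClique M (n - i)) := by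
  let f (q : NCClique M (n + 1)) : Fin (n + 1) :=
    ⟨q.firstSolidToLast, Nat.lt_succ_of_le q.firstSolidToLast_le⟩
  have fiber_zero : Nat.card {q // f q = 0} = Nat.card M * Nat.card (NCClique M n) := by
    rw [← Nat.card_prod, ← Nat.card_congr equivNoSolidToLast]
    refine Nat.card_congr (Equiv.subtypeEquivRight fun q => ?_)
    rw [← firstSolidToLast_eq_zero_iff, Fin.ext_iff]
    rfl
  have fiber_succ (i : Fin n) : Nat.card {q // f q = i.succ} =
      (Nat.card M - 1) * (Nat.card (NCClique M (i + 1)) * Nat.card (NCClique M (n - i))) := by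
    rw [← Nat.card_subtype_ne (1 : M), ← Nat.card_prod, ← Nat.card_prod,
      show n - i = n + 1 - (i + 1) by omega,
      ← Nat.card_congr (equivFirstSolidToLast (i + 1) (by omega) (by omega))]
    refine Nat.card_congr (Equiv.subtypeEquivRight fun q => ?_)
    rw [← firstSolidToLast_eq_iff q (by omega) (by omega), Fin.ext_iff]
    rfl
  rw [← Nat.card_congr (Equiv.sigmaFiberEquiv f), Nat.card_sigma, Fin.sum_univ_succ, fiber_zero,
    Finset.mul_sum, ← Fin.sum_univ_eq_sum_range]
  simp only [fiber_succ]

lemma card_one [Finite M] : Nat.card (NCClique M 1) = Nat.card M := by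
  simp [card_succ 0, card_zero]

end NCClique

namespace PowerSeries

open Finset

theorem mk_sub_one_eq_of_recurrence {R : Type*} [CommRing R] {f : ℕ → R} {a b : R}
    (h₀ : f 0 = 1) (hsucc : ∀ n, f (n + 1) = a * f n + b * ∑ i ∈ range n, f (i + 1) * f (n - i)) :
    mk f - 1 = C a * X * mk f + C b * (mk f - 1) ^ 2 := by
  set P := mk fun n => f (n + 1)
  have hshift : mk f - 1 = X * P := by
    ext (_ | n) <;> simp [P, h₀, coeff_succ_X_mul]
  have hP : P = C a * mk f + C b * (X * P ^ 2) := by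
    ext (_ | n)
    · simp [P, hsucc 0]
    rw [map_add, coeff_C_mul, coeff_C_mul, coeff_succ_X_mul, coeff_mk, coeff_mk, hsucc, sq,
      coeff_mul, Nat.sum_antidiagonal_eq_sum_range_succ_mk]
    congr 2
    refine sum_congr rfl fun i hi => ?_
    rw [mem_range] at hi
    simp only [P, coeff_mk, show n + 1 - i = n - i + 1 by omega]
  rw [hshift]
  linear_combination X * hP

end PowerSeries

open PowerSeries

theorem ncSeries_eq_mk_card_sub (M : Type) [One M] [Finite M] :
    ncSeries M =
      mk (fun n => (Nat.card (NCClique M n) : ℚ)) - 1 - C ((Nat.card M : ℚ) - 1) * X := by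
  ext (_ | _ | n)
  · simp [ncSeries, NCClique.card_zero]
  · simp [ncSeries, NCClique.card_one]
  · rw [map_sub, map_sub, coeff_succ_mul_X, coeff_C, if_neg n.succ_ne_zero]
    simp [ncSeries, Nat.card_congr NCClique.equivArcLabeling]

/-- For a finite unitary magma `M` with `m = #M`, the generating function `H(t)`
of noncrossing `M`-cliques satisfies
`t + (m³-2m²+2m-1)t² + (2m²t-3mt+2t-1)H(t) + (m-1)H(t)² = 0`. -/
theorem ncSeries_algebraic_equation (M : Type) [MulOneClass M] [Fintype M]
    (m : ℕ) (hm : Fintype.card M = m) :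
    (PowerSeries.X : PowerSeries ℚ)
      + PowerSeries.C ((m : ℚ) ^ 3 - 2 * (m : ℚ) ^ 2 + 2 * (m : ℚ) - 1) *
          PowerSeries.X ^ 2
      + (PowerSeries.C (2 * (m : ℚ) ^ 2 - 3 * (m : ℚ) + 2) * PowerSeries.X - 1) *
          ncSeries M
      + PowerSeries.C ((m : ℚ) - 1) * ncSeries M ^ 2 = 0 := by
  rw [← hm, ← Nat.card_eq_fintype_card, ncSeries_eq_mk_card_sub]
  have hM : 1 ≤ Nat.card M := Nat.card_pos
  have hF := mk_sub_one_eq_of_recurrence (f := fun n => (Nat.card (NCClique M n) : ℚ))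
    (a := Nat.card M) (b := Nat.card M - 1)
    (by simp [NCClique.card_zero]) fun n => by
      rw [NCClique.card_succ]
      push_cast [Nat.cast_sub hM]
      ring
  simp only [map_add, map_sub, map_mul, map_pow, map_natCast, map_one, map_ofNat] at hF ⊢
  linear_combination -hF
end

section
/- For a finite unitary magma M with m elements, the dimension of the space of quadratic relations of the noncrossing clique operad NCM, presented by the generators T_M (all M-triangles) with relations generated by the three displayed families, equals 2m⁶ - 2m⁵ + m⁴. -/
/-!
A basis tree `p ∘ᵢ q` of the free operad evaluates in `NC M` to a noncrossing `M`-clique of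
arity 3: its four outer edges carry the outer labels of `p` and `q`, and the glued edge becomes
a diagonal labelled `pᵢ ⋆ q₀`, which disappears when that label is `1`. Each generating relation
is a difference of two trees with the same value, and conversely every tree is joined to a
chosen tree of its value by at most two relations. Hence the relations span the kernel of the
surjective evaluation map, whose dimension is `2m⁶` minus the number `m⁴ (1 + 2 (m - 1))` of
such cliques.
-/

/-- The arity-3 component of the free operad on the binary generators `T_M`
(the `M`-triangles, encoded as triples `(p₀, p₁, p₂) ∈ M³`): a basis is given by
the syntax trees `p ∘₁ q` and `p ∘₂ q`, encoded as triples
`(side, p, q) : Bool × M³ × M³` where `false` stands for `∘₁` and `true` for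
`∘₂`.  Its dimension is `2 m⁶`. -/
abbrev FreeOp3 (M : Type) : Type := (Bool × (M × M × M) × (M × M × M)) → ℚ

open Module Submodule

section FiberSum

variable {K ι κ : Type*} [Fintype ι] [DecidableEq ι] [DecidableEq κ]

variable (K) in
def fiberSum [CommSemiring K] (c : ι → κ) : (ι → K) →ₗ[K] (κ → K) :=
  ∑ i, LinearMap.single K (fun _ => K) (c i) ∘ₗ LinearMap.proj i

section CommSemiring

variable [CommSemiring K] (c : ι → κ)

@[simp]
theorem fiberSum_single (i : ι) (a : K) : fiberSum K c (Pi.single i a) = Pi.single (c i) a := by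
  rw [fiberSum, LinearMap.sum_apply, Finset.sum_eq_single i]
  · simp
  · intro j _ hj
    simp [hj]
  · simp

theorem fiberSum_id [Fintype κ] : fiberSum K (id : κ → κ) = LinearMap.id := by
  ext
  simp

theorem fiberSum_comp [Fintype κ] {μ : Type*} [DecidableEq μ] (s : κ → μ) :
    fiberSum K (s ∘ c) = fiberSum K s ∘ₗ fiberSum K c := by
  ext
  simp

theorem fiberSum_surjective [Fintype κ] (hc : Function.Surjective c) :
    Function.Surjective (fiberSum K c) := fun g =>
  ⟨fiberSum K (Function.surjInv hc) g, by
    rw [← LinearMap.comp_apply, ← fiberSum_comp, (Function.rightInverse_surjInv hc).comp_eq_id,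
      fiberSum_id, LinearMap.id_apply]⟩

end CommSemiring

section CommRing

variable [CommRing K] (c : ι → κ)

theorem single_sub_single_mem_ker_fiberSum {i j : ι} (h : c i = c j) :
    Pi.single i 1 - Pi.single j 1 ∈ LinearMap.ker (fiberSum K c) := by
  simp [h]

theorem ker_fiberSum_le_span [Fintype κ] {S : Set (ι → K)} (s : κ → ι)
    (hs : ∀ i, Pi.single i 1 - Pi.single (s (c i)) 1 ∈ span K S) :
    LinearMap.ker (fiberSum K c) ≤ span K S := by
  intro f hf
  have hsplit :
      f - fiberSum K (s ∘ c) f = ∑ i, f i • (Pi.single i 1 - Pi.single (s (c i)) 1) := by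
    conv_lhs => rw [← Finset.univ_sum_single f]
    simp [smul_sub, Finset.sum_sub_distrib, map_sum, ← Pi.single_smul']
  have hproj : fiberSum K (s ∘ c) f = 0 := by
    rw [fiberSum_comp, LinearMap.comp_apply, LinearMap.mem_ker.1 hf, map_zero]
  rw [← sub_zero f, ← hproj, hsplit]
  exact sum_mem fun i _ => smul_mem _ _ (hs i)

theorem span_eq_ker_fiberSum [Fintype κ] {S : Set (ι → K)}
    (hS : S ⊆ LinearMap.ker (fiberSum K c)) (s : κ → ι)
    (hs : ∀ i, Pi.single i 1 - Pi.single (s (c i)) 1 ∈ span K S) :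
    span K S = LinearMap.ker (fiberSum K c) :=
  le_antisymm (span_le.2 hS) (ker_fiberSum_le_span c s hs)

end CommRing

theorem finrank_ker_fiberSum [Field K] [Fintype κ] {c : ι → κ} (hc : Function.Surjective c) :
    finrank K (LinearMap.ker (fiberSum K c)) = Fintype.card ι - Fintype.card κ := by
  have h := LinearMap.finrank_range_add_finrank_ker (fiberSum K c)
  rw [LinearMap.range_eq_top.2 (fiberSum_surjective c hc), finrank_top,
    finrank_fintype_fun_eq_card, finrank_fintype_fun_eq_card] at h
  omega

end FiberSum

namespace NoncrossingClique

abbrev Tree3 (M : Type) : Type := Bool × (M × M × M) × (M × M × M)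

theorem card_tree3 (M : Type) [Fintype M] : Fintype.card (Tree3 M) = 2 * Fintype.card M ^ 6 := by
  simp only [Fintype.card_prod, Fintype.card_bool]
  ring

/-- A noncrossing `M`-clique of arity 3: the labels of its base and of its edges `1, 2, 3`,
and its diagonal, if labelled `≠ 1`: `false` is the diagonal `0–2` (created by `∘₁`),
`true` the diagonal `1–3` (created by `∘₂`). -/
abbrev Square (M : Type) [One M] : Type := (M × M × M × M) × Option (Bool × {d : M // d ≠ 1})

theorem card_square (M : Type) [One M] [DecidableEq M] [Fintype M] :
    Fintype.card (Square M) = Fintype.card M ^ 4 * (2 * (Fintype.card M - 1) + 1) := by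
  simp only [Fintype.card_prod, Fintype.card_option, Fintype.card_bool, ne_eq,
    Fintype.card_subtype_compl, Fintype.card_unique]
  ring

variable {M : Type} [MulOneClass M] [DecidableEq M]

def diagonal (b : Bool) (d : M) : Option (Bool × {d : M // d ≠ 1}) :=
  if h : d = 1 then none else some (b, ⟨d, h⟩)

def compose : Tree3 M → Square M
  | (false, (p₀, p₁, p₂), (q₀, q₁, q₂)) => ((p₀, q₁, q₂, p₂), diagonal false (p₁ * q₀))
  | (true, (p₀, p₁, p₂), (q₀, q₁, q₂)) => ((p₀, p₁, q₁, q₂), diagonal true (p₂ * q₀))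

def decompose : Square M → Tree3 M
  | ((a, b, c, d), none) => (false, (a, 1, d), (1, b, c))
  | ((a, b, c, d), some (false, e)) => (false, (a, e, d), (1, b, c))
  | ((a, b, c, d), some (true, e)) => (true, (a, b, e), (1, c, d))

theorem compose_decompose (x : Square M) : compose (decompose x) = x := by
  rcases x with ⟨⟨a, b, c, d⟩, _ | ⟨_ | _, e, he⟩⟩ <;>
    simp_all [decompose, compose, diagonal]

theorem compose_surjective : Function.Surjective (compose : Tree3 M → Square M) :=
  Function.LeftInverse.surjective compose_decompose

variable (M) in
def relations : Set (FreeOp3 M) :=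
  ({f : FreeOp3 M | ∃ p₀ p₁ p₂ q₀ q₁ q₂ r₀ r₁ : M,
      p₁ * q₀ = r₁ * r₀ ∧ p₁ * q₀ ≠ 1 ∧
      f = Pi.single (false, (p₀, p₁, p₂), (q₀, q₁, q₂)) 1
          - Pi.single (false, (p₀, r₁, p₂), (r₀, q₁, q₂)) 1} ∪
    {f : FreeOp3 M | ∃ p₀ p₁ p₂ q₀ q₁ q₂ r₀ r₂ : M,
      p₁ * q₀ = 1 ∧ r₂ * r₀ = 1 ∧
      f = Pi.single (false, (p₀, p₁, p₂), (q₀, q₁, q₂)) 1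
          - Pi.single (true, (p₀, q₁, r₂), (r₀, q₂, p₂)) 1}) ∪
    {f : FreeOp3 M | ∃ p₀ p₁ p₂ q₀ q₁ q₂ r₀ r₂ : M,
      p₂ * q₀ = r₂ * r₀ ∧ p₂ * q₀ ≠ 1 ∧
      f = Pi.single (true, (p₀, p₁, p₂), (q₀, q₁, q₂)) 1
          - Pi.single (true, (p₀, p₁, r₂), (r₀, q₁, q₂)) 1}

theorem single_sub_single_decompose_compose_mem_span (t : Tree3 M) :
    Pi.single t 1 - Pi.single (decompose (compose t)) 1 ∈ span ℚ (relations M) := by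
  obtain ⟨_ | _, ⟨p₀, p₁, p₂⟩, q₀, q₁, q₂⟩ := t
  · by_cases h : p₁ * q₀ = 1
    · -- both trees are related to the same `∘₂`-tree by relations (ii)
      have ht : Pi.single (false, (p₀, p₁, p₂), (q₀, q₁, q₂)) 1
          - Pi.single (true, (p₀, q₁, 1), (1, q₂, p₂)) 1 ∈ relations M :=
        .inl (.inr ⟨p₀, p₁, p₂, q₀, q₁, q₂, 1, 1, h, mul_one 1, rfl⟩)
      have hd : Pi.single (false, (p₀, 1, p₂), (1, q₁, q₂)) 1
          - Pi.single (true, (p₀, q₁, 1), (1, q₂, p₂)) 1 ∈ relations M :=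
        .inl (.inr ⟨p₀, 1, p₂, 1, q₁, q₂, 1, 1, mul_one 1, mul_one 1, rfl⟩)
      simpa [compose, diagonal, decompose, h] using
        sub_mem (subset_span ht) (subset_span hd)
    · have hr : Pi.single (false, (p₀, p₁, p₂), (q₀, q₁, q₂)) 1
          - Pi.single (false, (p₀, p₁ * q₀, p₂), (1, q₁, q₂)) 1 ∈ relations M :=
        .inl (.inl ⟨p₀, p₁, p₂, q₀, q₁, q₂, 1, p₁ * q₀, (mul_one _).symm, h, rfl⟩)
      simpa [compose, diagonal, decompose, h] using subset_span hr
  · by_cases h : p₂ * q₀ = 1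
    · have hr : Pi.single (false, (p₀, 1, q₂), (1, p₁, q₁)) 1
          - Pi.single (true, (p₀, p₁, p₂), (q₀, q₁, q₂)) 1 ∈ relations M :=
        .inl (.inr ⟨p₀, 1, q₂, 1, p₁, q₁, q₀, p₂, mul_one 1, h, rfl⟩)
      simpa [compose, diagonal, decompose, h] using neg_mem (subset_span hr)
    · have hr : Pi.single (true, (p₀, p₁, p₂), (q₀, q₁, q₂)) 1
          - Pi.single (true, (p₀, p₁, p₂ * q₀), (1, q₁, q₂)) 1 ∈ relations M :=
        .inr ⟨p₀, p₁, p₂, q₀, q₁, q₂, 1, p₂ * q₀, (mul_one _).symm, h, rfl⟩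
      simpa [compose, diagonal, decompose, h] using subset_span hr

variable [Fintype M]

theorem relations_subset_ker_fiberSum_compose :
    relations M ⊆ LinearMap.ker (fiberSum ℚ (compose : Tree3 M → Square M)) := by
  rintro f ((⟨p₀, p₁, p₂, q₀, q₁, q₂, r₀, r₁, h, -, rfl⟩ |
      ⟨p₀, p₁, p₂, q₀, q₁, q₂, r₀, r₂, h, h', rfl⟩) |
      ⟨p₀, p₁, p₂, q₀, q₁, q₂, r₀, r₂, h, -, rfl⟩)
  · exact single_sub_single_mem_ker_fiberSum _ (by simp [compose, h])
  · exact single_sub_single_mem_ker_fiberSum _ (by simp [compose, diagonal, h, h'])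
  · exact single_sub_single_mem_ker_fiberSum _ (by simp [compose, h])

theorem span_relations_eq_ker_fiberSum_compose :
    span ℚ (relations M) = LinearMap.ker (fiberSum ℚ compose) :=
  span_eq_ker_fiberSum _ relations_subset_ker_fiberSum_compose decompose
    single_sub_single_decompose_compose_mem_span

end NoncrossingClique

open NoncrossingClique in
/-- For a finite unitary magma `M` with `m` elements, the space of quadratic
relations `R_{NC M}` of the noncrossing clique operad `NC M` — the subspace of
the arity-3 component of the free operad on the `M`-triangles spanned by the
three displayed families of relations — has dimension `2m⁶ - 2m⁵ + m⁴`. -/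
theorem dim_relations_noncrossing_operad (M : Type) [MulOneClass M] [Fintype M]
    [DecidableEq M] (m : ℕ) (hm : Fintype.card M = m) :
    Module.finrank ℚ ↥(Submodule.span ℚ
      (({f : FreeOp3 M | ∃ p₀ p₁ p₂ q₀ q₁ q₂ r₀ r₁ : M,
          p₁ * q₀ = r₁ * r₀ ∧ p₁ * q₀ ≠ 1 ∧
          f = Pi.single (false, (p₀, p₁, p₂), (q₀, q₁, q₂)) 1
              - Pi.single (false, (p₀, r₁, p₂), (r₀, q₁, q₂)) 1} ∪
        {f : FreeOp3 M | ∃ p₀ p₁ p₂ q₀ q₁ q₂ r₀ r₂ : M,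
          p₁ * q₀ = 1 ∧ r₂ * r₀ = 1 ∧
          f = Pi.single (false, (p₀, p₁, p₂), (q₀, q₁, q₂)) 1
              - Pi.single (true, (p₀, q₁, r₂), (r₀, q₂, p₂)) 1}) ∪
        {f : FreeOp3 M | ∃ p₀ p₁ p₂ q₀ q₁ q₂ r₀ r₂ : M,
          p₂ * q₀ = r₂ * r₀ ∧ p₂ * q₀ ≠ 1 ∧
          f = Pi.single (true, (p₀, p₁, p₂), (q₀, q₁, q₂)) 1
              - Pi.single (true, (p₀, p₁, r₂), (r₀, q₁, q₂)) 1})) =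
      2 * m ^ 6 - 2 * m ^ 5 + m ^ 4 := by
  change finrank ℚ (span ℚ (relations M)) = _
  rw [span_relations_eq_ker_fiberSum_compose, finrank_ker_fiberSum compose_surjective, card_tree3,
    card_square, hm]
  have hm1 : 1 ≤ m := hm ▸ Fintype.card_pos
  have h54 : m ^ 4 ≤ m ^ 5 := Nat.pow_le_pow_right hm1 (by norm_num)
  have h65 : m ^ 5 ≤ m ^ 6 := Nat.pow_le_pow_right hm1 (by norm_num)
  have hsq : m ^ 4 * (2 * (m - 1) + 1) = 2 * m ^ 5 - m ^ 4 := by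
    zify [hm1, h54.trans (Nat.le_mul_of_pos_left _ two_pos)]
    ring
  omega
end

section
/- Let M be a finite unitary magma and A an associative algebra equipped with linear maps ω_x : A → A for each x ∈ M such that ω_1 = id and ω_x ∘ ω_y = ω_{x⋆y}. Define, for each M-triangle p = (p₀,p₁,p₂) ∈ M³, the binary operation a₁ *_p a₂ := ω_{p₀}(ω_{p₁}(a₁) · ω_{p₂}(a₂)). Then these operations satisfy: (1) (a₁ *_q a₂) *_p a₃ = (a₁ *_{q'} a₂) *_{p'} a₃ whenever p₁ ⋆ q₀ = p'₁ ⋆ q'₀ and the other components of p,q match those of p',q'; (2) (a₁ *_q a₂) *_p a₃ = a₁ *_r (a₂ *_s a₃) whenever p₁ ⋆ q₀ = 1 = r₂ ⋆ s₀, r₀ = p₀, r₁ = q₁, s₁ = q₂, s₂ = p₂; (3) a₁ *_p (a₂ *_q a₃) = a₁ *_{p'} (a₂ *_{q'} a₃) whenever p₂ ⋆ q₀ = p'₂ ⋆ q'₀ and the other components match. -/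
theorem compatible_algebra_is_NCM_algebra_general (K : Type) [CommSemiring K]
    (M : Type) [MulOneClass M]
    (A : Type) [NonUnitalSemiring A] [Module K A]
    (ω : M → A →ₗ[K] A)
    (hone : ω 1 = LinearMap.id)
    (hcomp : ∀ x y : M, ω x ∘ₗ ω y = ω (x * y)) :
    (∀ (p₀ p₁ p₂ q₀ q₁ q₂ r₀ r₁ : M) (a₁ a₂ a₃ : A), p₁ * q₀ = r₁ * r₀ →
        ω p₀ (ω p₁ (ω q₀ (ω q₁ a₁ * ω q₂ a₂)) * ω p₂ a₃) =
          ω p₀ (ω r₁ (ω r₀ (ω q₁ a₁ * ω q₂ a₂)) * ω p₂ a₃)) ∧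
    (∀ (p₀ p₁ p₂ q₀ q₁ q₂ r₀ r₂ : M) (a₁ a₂ a₃ : A), p₁ * q₀ = 1 → r₂ * r₀ = 1 →
        ω p₀ (ω p₁ (ω q₀ (ω q₁ a₁ * ω q₂ a₂)) * ω p₂ a₃) =
          ω p₀ (ω q₁ a₁ * ω r₂ (ω r₀ (ω q₂ a₂ * ω p₂ a₃)))) ∧
    (∀ (p₀ p₁ p₂ q₀ q₁ q₂ r₀ r₂ : M) (a₁ a₂ a₃ : A), p₂ * q₀ = r₂ * r₀ →
        ω p₀ (ω p₁ a₁ * ω p₂ (ω q₀ (ω q₁ a₂ * ω q₂ a₃))) =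
          ω p₀ (ω p₁ a₁ * ω r₂ (ω r₀ (ω q₁ a₂ * ω q₂ a₃)))) := by
  have hmul (x y : M) (a : A) : ω x (ω y a) = ω (x * y) a := LinearMap.congr_fun (hcomp x y) a
  refine ⟨fun p₀ p₁ p₂ q₀ q₁ q₂ r₀ r₁ a₁ a₂ a₃ h => ?_,
    fun p₀ p₁ p₂ q₀ q₁ q₂ r₀ r₂ a₁ a₂ a₃ h₁ h₂ => ?_,
    fun p₀ p₁ p₂ q₀ q₁ q₂ r₀ r₂ a₁ a₂ a₃ h => ?_⟩
  · rw [hmul, hmul, h]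
  · rw [hmul, hmul, h₁, h₂, hone, LinearMap.id_apply, LinearMap.id_apply, mul_assoc]
  · rw [hmul, hmul, h]

/-- Let `M` be a finite unitary magma and `A` an associative algebra over `K`
equipped with linear maps `ω_x : A → A`, `x ∈ M`, such that `ω_1 = id` and
`ω_x ∘ ω_y = ω_{x ⋆ y}` (an `M`-compatible associative algebra).  The binary
operations `a₁ *_p a₂ := ω_{p₀}(ω_{p₁}(a₁) ⬝ ω_{p₂}(a₂))`, for `M`-triangles
`p = (p₀, p₁, p₂) ∈ M³`, satisfy the three defining relations of algebras over
the noncrossing clique operad `NC M`. -/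
theorem compatible_algebra_is_NCM_algebra (K : Type) [CommSemiring K]
    (M : Type) [Fintype M] [MulOneClass M]
    (A : Type) [NonUnitalSemiring A] [Module K A]
    [SMulCommClass K A A] [IsScalarTower K A A]
    (ω : M → A →ₗ[K] A)
    (hone : ω 1 = LinearMap.id)
    (hcomp : ∀ x y : M, ω x ∘ₗ ω y = ω (x * y)) :
    (∀ (p₀ p₁ p₂ q₀ q₁ q₂ r₀ r₁ : M) (a₁ a₂ a₃ : A), p₁ * q₀ = r₁ * r₀ →
        ω p₀ (ω p₁ (ω q₀ (ω q₁ a₁ * ω q₂ a₂)) * ω p₂ a₃) =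
          ω p₀ (ω r₁ (ω r₀ (ω q₁ a₁ * ω q₂ a₂)) * ω p₂ a₃)) ∧
    (∀ (p₀ p₁ p₂ q₀ q₁ q₂ r₀ r₂ : M) (a₁ a₂ a₃ : A), p₁ * q₀ = 1 → r₂ * r₀ = 1 →
        ω p₀ (ω p₁ (ω q₀ (ω q₁ a₁ * ω q₂ a₂)) * ω p₂ a₃) =
          ω p₀ (ω q₁ a₁ * ω r₂ (ω r₀ (ω q₂ a₂ * ω p₂ a₃)))) ∧
    (∀ (p₀ p₁ p₂ q₀ q₁ q₂ r₀ r₂ : M) (a₁ a₂ a₃ : A), p₂ * q₀ = r₂ * r₀ →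
        ω p₀ (ω p₁ a₁ * ω p₂ (ω q₀ (ω q₁ a₂ * ω q₂ a₃))) =
          ω p₀ (ω p₁ a₁ * ω r₂ (ω r₀ (ω q₁ a₂ * ω q₂ a₃)))) :=
  compatible_algebra_is_NCM_algebra_general K M A ω hone hcomp
end
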